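/- arXiv:2601.20294 — 5 statements merged into one kernel-verified Lean document; each statement's English description precedes it below -/
import Mathlib

section
/- Let α, β > 0 and s, σ ∈ ℝ. Then there exists ε₀ ∈ (0,1) such that for every ε ∈ (0, ε₀) there exist an integer N ≥ 3, a function φ̂ : ℕ₀ → ℂ with φ̂(n) = 0 for n ∉ {0, N} and Σ_{n∈ℕ₀} ⟨n⟩^{2s} |φ̂(n)|² < ε², a time T ∈ (0, ε), and a function a : [0,T] × ℕ₀ → ℂ such that: (i) for every n ∈ ℕ₀ the map t ↦ a(t,n) is differentiable on [0,T] and satisfies ∂_t a(t,n) + i n^α a(t,n) = Σ_{n₁,n₂ ∈ ℕ₀, n₁+n₂=n} a(t,n₁) n₂^β a(t,n₂) for all t ∈ [0,T], with a(0,n) = φ̂(n); and (ii) Σ_{n∈ℕ₀} ⟨n⟩^{2σ} |a(T,n)|² > ε^{−2}. (This is norm inflation with infinite loss of regularity, expressed in Fourier coefficients, for ∂_t u + i D^α u = u D^β u on the torus 𝕋.) -/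
/-!
Take the datum `c δ₀ + b δ_N` with `c = ε/2`, `b = (ε/2)⟨N⟩^{-s}`. Since `0^α = 0^β = 0`, mode `0`
stays equal to `c`, and on the multiples of `N` the system becomes triangular: mode `kN` solves a
linear equation with rate `c (kN)^β - i (kN)^α`, forced by products of lower modes, so Duhamel's
formula solves the modes one after another. Mode `N` is `b exp((c N^β - i N^α) t)`, hence at
`T = ε/2` the `H^σ` norm is at least `(ε/2) ⟨N⟩^{σ-s} exp(ε² N^β / 4)`, which beats every power of
`N` as `N → ∞`.
-/

open MeasureTheory

/-- Japanese bracket `⟨x⟩ = (1 + x²)^{1/2}`. -/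
noncomputable def jap (x : ℝ) : ℝ := Real.sqrt (1 + x ^ 2)

open Complex Finset Finset.HasAntidiagonal Filter
open scoped ENNReal

noncomputable section

def duhamel (z x₀ : ℂ) (g : ℝ → ℂ) (t : ℝ) : ℂ :=
  cexp (z * t) * (x₀ + ∫ s in (0 : ℝ)..t, cexp (-(z * s)) * g s)

section Duhamel

variable {z x₀ : ℂ} {g : ℝ → ℂ}

@[simp]
lemma duhamel_apply_zero : duhamel z x₀ g 0 = x₀ := by
  simp [duhamel]

lemma hasDerivAt_duhamel (hg : Continuous g) (t : ℝ) :
    HasDerivAt (duhamel z x₀ g) (z * duhamel z x₀ g t + g t) t := by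
  have hint : Continuous fun s : ℝ => cexp (-(z * s)) * g s := by fun_prop
  have hexp : HasDerivAt (fun u : ℝ => cexp (z * u)) (cexp (z * t) * z) t := by
    simpa using ((hasDerivAt_id (t : ℂ)).const_mul z).cexp.comp_ofReal
  have hprim : HasDerivAt (fun u : ℝ => x₀ + ∫ s in (0 : ℝ)..u, cexp (-(z * s)) * g s)
      (cexp (-(z * t)) * g t) t :=
    (intervalIntegral.integral_hasDerivAt_right (hint.intervalIntegrable 0 t)
      hint.aestronglyMeasurable.stronglyMeasurableAtFilter hint.continuousAt).const_add x₀
  refine (hexp.mul hprim).congr_deriv ?_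
  rw [duhamel, ← mul_assoc (cexp _), ← Complex.exp_add, add_neg_cancel, Complex.exp_zero]
  ring

lemma continuous_duhamel (hg : Continuous g) : Continuous (duhamel z x₀ g) :=
  continuous_iff_continuousAt.2 fun t => (hasDerivAt_duhamel hg t).continuousAt

end Duhamel

section Triangular

variable (μ x₀ : ℕ → ℂ) (F : ℕ → (ℕ → ℝ → ℂ) → ℝ → ℂ)

def triangularSolution (k : ℕ) : ℝ → ℂ :=
  duhamel (μ k) (x₀ k) (F k fun j => if j < k then triangularSolution j else 0)
termination_by k

variable {μ x₀ F}
variable (hF : ∀ k f g, (∀ j < k, f j = g j) → F k f = F k g)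
  (hFc : ∀ k f, (∀ j < k, Continuous (f j)) → Continuous (F k f))
include hF

lemma triangularSolution_eq (k : ℕ) :
    triangularSolution μ x₀ F k = duhamel (μ k) (x₀ k) (F k (triangularSolution μ x₀ F)) := by
  rw [triangularSolution, hF k _ (triangularSolution μ x₀ F) fun j hj => if_pos hj]

include hFc

lemma continuous_triangularSolution (k : ℕ) : Continuous (triangularSolution μ x₀ F k) := by
  induction k using Nat.strong_induction_on with
  | _ k ih =>
    rw [triangularSolution_eq hF]
    exact continuous_duhamel (hFc k _ ih)

lemma hasDerivAt_triangularSolution (k : ℕ) (t : ℝ) :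
    HasDerivAt (triangularSolution μ x₀ F k)
      (μ k * triangularSolution μ x₀ F k t + F k (triangularSolution μ x₀ F) t) t := by
  rw [triangularSolution_eq hF]
  exact hasDerivAt_duhamel (hFc k _ fun j _ => continuous_triangularSolution hF hFc j) t

end Triangular

def fourierField (ω w : ℕ → ℝ) (a : ℕ → ℂ) (n : ℕ) : ℂ :=
  -(I * (ω n : ℂ) * a n) + ∑ p ∈ antidiagonal n, a p.1 * (w p.2 : ℂ) * a p.2

lemma sum_antidiagonal_eq_of_weight_zero {w : ℕ → ℝ} (hw : w 0 = 0) (a : ℕ → ℂ) (k : ℕ) :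
    ∑ p ∈ antidiagonal k, a p.1 * (w p.2 : ℂ) * a p.2 =
      a 0 * w k * a k + ∑ j ∈ Ico 1 k, a j * w (k - j) * a (k - j) := by
  rw [Finset.Nat.sum_antidiagonal_eq_sum_range_succ (fun i j => a i * (w j : ℂ) * a j),
    sum_range_succ, Nat.sub_self, hw]
  rcases Nat.eq_zero_or_pos k with rfl | hk
  · simp [hw]
  · rw [range_eq_Ico, sum_eq_sum_Ico_succ_bot hk, Nat.sub_zero]
    simp

section Cascade

variable (ω w : ℕ → ℝ) (x₀ : ℕ → ℂ)

def cascadeForcing (k : ℕ) (f : ℕ → ℝ → ℂ) (t : ℝ) : ℂ :=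
  ∑ j ∈ Ico 1 k, f j t * w (k - j) * f (k - j) t

/-- Freezing mode `0` at `x₀ 0` makes the system triangular: mode `k` grows at the rate
`x₀ 0 * w k - i ω k` and is forced by the interaction of the lower modes. -/
def cascade : ℕ → ℝ → ℂ :=
  triangularSolution (fun k => x₀ 0 * w k - I * ω k) x₀ (cascadeForcing w)

variable {ω w x₀}

lemma cascadeForcing_congr {k : ℕ} {f g : ℕ → ℝ → ℂ} (h : ∀ j < k, f j = g j) :
    cascadeForcing w k f = cascadeForcing w k g := by
  funext t
  refine sum_congr rfl fun j hj => ?_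
  rw [mem_Ico] at hj
  rw [h j hj.2, h (k - j) (by omega)]

lemma continuous_cascadeForcing {k : ℕ} {f : ℕ → ℝ → ℂ} (hf : ∀ j < k, Continuous (f j)) :
    Continuous (cascadeForcing w k f) := by
  refine continuous_finsetSum _ fun j hj => ?_
  rw [mem_Ico] at hj
  exact ((hf j hj.2).mul continuous_const).mul (hf (k - j) (by omega))

lemma cascade_eq (k : ℕ) :
    cascade ω w x₀ k =
      duhamel (x₀ 0 * w k - I * ω k) (x₀ k) (cascadeForcing w k (cascade ω w x₀)) :=
  triangularSolution_eq (fun _ _ _ => cascadeForcing_congr) k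

@[simp]
lemma cascade_apply_zero (k : ℕ) : cascade ω w x₀ k 0 = x₀ k := by
  rw [cascade_eq, duhamel_apply_zero]

lemma cascade_zero (hω : ω 0 = 0) (hw : w 0 = 0) : cascade ω w x₀ 0 = fun _ => x₀ 0 := by
  funext t
  rw [cascade_eq]
  simp [duhamel, cascadeForcing, hω, hw]

lemma cascade_one_apply (t : ℝ) :
    cascade ω w x₀ 1 t = cexp ((x₀ 0 * w 1 - I * ω 1) * t) * x₀ 1 := by
  rw [cascade_eq]
  simp [duhamel, cascadeForcing]

lemma hasDerivAt_cascade (hω : ω 0 = 0) (hw : w 0 = 0) (k : ℕ) (t : ℝ) :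
    HasDerivAt (cascade ω w x₀ k) (fourierField ω w (fun n => cascade ω w x₀ n t) k) t := by
  refine (hasDerivAt_triangularSolution (μ := fun k => x₀ 0 * w k - I * ω k) (x₀ := x₀)
    (fun _ _ _ => cascadeForcing_congr) (fun _ _ => continuous_cascadeForcing) k t).congr_deriv ?_
  rw [fourierField, sum_antidiagonal_eq_of_weight_zero hw (fun n => cascade ω w x₀ n t)]
  change _ * cascade ω w x₀ k t + cascadeForcing w k (cascade ω w x₀) t = _
  rw [cascadeForcing, cascade_zero hω hw]
  ring

end Cascade

section Spread

variable {R : Type*} {N : ℕ}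

def spread [Zero R] (N : ℕ) (a : ℕ → R) (n : ℕ) : R :=
  if N ∣ n then a (n / N) else 0

lemma spread_mul_apply [Zero R] (hN : 0 < N) (a : ℕ → R) (k : ℕ) : spread N a (k * N) = a k := by
  rw [spread, if_pos (dvd_mul_left N k), Nat.mul_div_cancel k hN]

lemma spread_of_not_dvd [Zero R] {a : ℕ → R} {n : ℕ} (h : ¬ N ∣ n) : spread N a n = 0 :=
  if_neg h

lemma mul_spread [MulZeroClass R] (c a : ℕ → R) (n : ℕ) :
    c n * spread N a n = spread N (fun m => c (m * N) * a m) n := by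
  by_cases h : N ∣ n
  · rw [spread, spread, if_pos h, if_pos h, Nat.div_mul_cancel h]
  · rw [spread_of_not_dvd h, spread_of_not_dvd h, mul_zero]

lemma sum_antidiagonal_spread_mul [NonUnitalNonAssocSemiring R] (hN : 0 < N) (a b : ℕ → R)
    (k : ℕ) :
    ∑ p ∈ antidiagonal (k * N), spread N a p.1 * spread N b p.2 =
      ∑ p ∈ antidiagonal k, a p.1 * b p.2 := by
  have hinj : Function.Injective (Prod.map (· * N) (· * N) : ℕ × ℕ → ℕ × ℕ) :=
    (mul_left_injective₀ hN.ne').prodMap (mul_left_injective₀ hN.ne')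
  have hsub : (antidiagonal k).image (Prod.map (· * N) (· * N)) ⊆ antidiagonal (k * N) := by
    intro q hq
    obtain ⟨p, hp, rfl⟩ := mem_image.1 hq
    rw [HasAntidiagonal.mem_antidiagonal] at hp ⊢
    simp [← hp, add_mul]
  rw [← sum_subset hsub, sum_image hinj.injOn]
  · simp only [Prod.map_fst, Prod.map_snd, spread_mul_apply hN]
  · intro q hq hq'
    suffices ¬ N ∣ q.1 by rw [spread_of_not_dvd this, zero_mul]
    rintro ⟨i, hi⟩
    rw [HasAntidiagonal.mem_antidiagonal] at hq
    obtain ⟨j, hj⟩ : N ∣ q.2 := (Nat.dvd_add_right ⟨i, hi⟩).1 (hq ▸ dvd_mul_left N k)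
    refine hq' (mem_image.2 ⟨(i, j), ?_, ?_⟩)
    · rw [HasAntidiagonal.mem_antidiagonal]
      apply Nat.eq_of_mul_eq_mul_right hN
      rw [add_mul, ← hq, hi, hj, mul_comm i, mul_comm j]
    · ext <;> simp [hi, hj, mul_comm]

lemma sum_antidiagonal_spread_mul_of_not_dvd [NonUnitalNonAssocSemiring R] (a b : ℕ → R)
    {n : ℕ} (h : ¬ N ∣ n) :
    ∑ p ∈ antidiagonal n, spread N a p.1 * spread N b p.2 = 0 := by
  refine sum_eq_zero fun p hp => ?_
  rw [HasAntidiagonal.mem_antidiagonal] at hp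
  by_cases h₁ : N ∣ p.1
  · rw [spread_of_not_dvd (a := b) fun h₂ => h (hp ▸ dvd_add h₁ h₂), mul_zero]
  · rw [spread_of_not_dvd h₁, zero_mul]

end Spread

lemma hasDerivAt_spread {ω w : ℕ → ℝ} {N : ℕ} (hN : 0 < N) {A : ℝ → ℕ → ℂ}
    (hA : ∀ k t, HasDerivAt (fun τ => A τ k)
      (fourierField (fun k => ω (k * N)) (fun k => w (k * N)) (A t) k) t) (n : ℕ) (t : ℝ) :
    HasDerivAt (fun τ => spread N (A τ) n) (fourierField ω w (spread N (A t)) n) t := by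
  have hsum : ∀ a : ℕ → ℂ, ∑ p ∈ antidiagonal n, spread N a p.1 * (w p.2 : ℂ) * spread N a p.2 =
      ∑ p ∈ antidiagonal n, spread N a p.1 * spread N (fun m => (w (m * N) : ℂ) * a m) p.2 := by
    intro a
    simp only [mul_assoc, mul_spread (fun m => (w m : ℂ))]
  by_cases h : N ∣ n
  · obtain ⟨k, rfl⟩ : ∃ k, n = k * N := ⟨n / N, (Nat.div_mul_cancel h).symm⟩
    simp only [fourierField, hsum, sum_antidiagonal_spread_mul hN, spread_mul_apply hN]
    simpa only [fourierField, mul_assoc] using hA k t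
  · simp only [fourierField, hsum, sum_antidiagonal_spread_mul_of_not_dvd _ _ h,
      spread_of_not_dvd h, mul_zero, neg_zero, add_zero]
    exact hasDerivAt_const t 0

def twoModeDatum (c b : ℂ) (k : ℕ) : ℂ :=
  if k = 0 then c else if k = 1 then b else 0

def twoModeSolution (α β : ℝ) (N : ℕ) (c b : ℂ) (t : ℝ) : ℕ → ℂ :=
  spread N fun k =>
    cascade (fun k => ((k * N : ℕ) : ℝ) ^ α) (fun k => ((k * N : ℕ) : ℝ) ^ β) (twoModeDatum c b) k t

section TwoModeSolution

variable {α β : ℝ} {N : ℕ} {c b : ℂ}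

lemma hasDerivAt_twoModeSolution (hα : 0 < α) (hβ : 0 < β) (hN : 0 < N) (n : ℕ) (t : ℝ) :
    HasDerivAt (fun τ => twoModeSolution α β N c b τ n)
      (fourierField (fun n => (n : ℝ) ^ α) (fun n => (n : ℝ) ^ β)
        (twoModeSolution α β N c b t) n) t :=
  hasDerivAt_spread (ω := fun n => (n : ℝ) ^ α) (w := fun n => (n : ℝ) ^ β) hN
    (fun k t => hasDerivAt_cascade (by simp [hα.ne']) (by simp [hβ.ne']) k t) n t

lemma twoModeSolution_zero_apply_zero : twoModeSolution α β N c b 0 0 = c := by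
  simp [twoModeSolution, spread, twoModeDatum]

lemma twoModeSolution_zero_apply_of_ne {n : ℕ} (h₀ : n ≠ 0) (hN : n ≠ N) :
    twoModeSolution α β N c b 0 n = 0 := by
  by_cases h : N ∣ n
  · obtain ⟨k, rfl⟩ := h
    have : k ≠ 0 := by rintro rfl; simp at h₀
    have : k ≠ 1 := by rintro rfl; simp at hN
    simp_all [twoModeSolution, spread, twoModeDatum]
  · exact spread_of_not_dvd h

lemma norm_twoModeSolution_apply_self (hN : 0 < N) (c b : ℝ) (t : ℝ) :
    ‖twoModeSolution α β N c b t N‖ = Real.exp (c * (N : ℝ) ^ β * t) * |b| := by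
  have := spread_mul_apply hN (fun k => cascade (fun k => ((k * N : ℕ) : ℝ) ^ α)
    (fun k => ((k * N : ℕ) : ℝ) ^ β) (twoModeDatum c b) k t) 1
  rw [one_mul] at this
  rw [twoModeSolution, this, cascade_one_apply, norm_mul, Complex.norm_exp]
  simp [twoModeDatum, Complex.mul_re]

end TwoModeSolution

lemma one_le_jap (x : ℝ) : 1 ≤ jap x :=
  Real.one_le_sqrt.2 (by nlinarith)

lemma jap_pos (x : ℝ) : 0 < jap x :=
  one_pos.trans_le (one_le_jap x)

lemma jap_le_two_mul {x : ℝ} (hx : 1 ≤ x) : jap x ≤ 2 * x :=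
  (Real.sqrt_le_left (by linarith)).2 (by nlinarith)

lemma tendsto_jap_rpow_mul_exp (r : ℝ) {d β : ℝ} (hd : 0 < d) (hβ : 0 < β) :
    Tendsto (fun x : ℝ => jap x ^ r * Real.exp (d * x ^ β)) atTop atTop := by
  have hexp : Tendsto (fun x : ℝ => Real.exp (d * x ^ β) / x ^ |r|) atTop atTop := by
    refine ((tendsto_exp_mul_div_rpow_atTop (|r| / β) d hd).comp (tendsto_rpow_atTop hβ)).congr' ?_
    filter_upwards [eventually_ge_atTop 0] with x hx
    rw [Function.comp_apply, ← Real.rpow_mul hx, mul_div_cancel₀ _ hβ.ne']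
  refine tendsto_atTop_mono' _ ?_ (hexp.const_mul_atTop (by positivity : (0 : ℝ) < 2 ^ (-|r|)))
  filter_upwards [eventually_ge_atTop 1] with x hx
  have hx₀ : 0 ≤ x := by linarith
  calc 2 ^ (-|r|) * (Real.exp (d * x ^ β) / x ^ |r|)
      = (2 * x) ^ (-|r|) * Real.exp (d * x ^ β) := by
        rw [Real.mul_rpow zero_le_two hx₀, Real.rpow_neg hx₀]
        ring
    _ ≤ jap x ^ (-|r|) * Real.exp (d * x ^ β) := by
        gcongr ?_ * _
        exact Real.rpow_le_rpow_of_nonpos (jap_pos x) (jap_le_two_mul hx)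
          (neg_nonpos.2 (abs_nonneg r))
    _ ≤ jap x ^ r * Real.exp (d * x ^ β) := by
        gcongr
        exacts [one_le_jap x, neg_abs_le r]

lemma rpow_two_mul_mul_sq_mul_rpow_neg {y : ℝ} (hy : 0 < y) (r s x : ℝ) :
    y ^ (2 * r) * (x * y ^ (-s)) ^ 2 = x ^ 2 * y ^ (2 * r - 2 * s) := by
  rw [mul_pow, ← Real.rpow_natCast (y ^ (-s)), ← Real.rpow_mul hy.le,
    sub_eq_add_neg, Real.rpow_add hy]
  push_cast
  ring_nf

def sobolevNormSq (s : ℝ) (a : ℕ → ℂ) : ℝ≥0∞ :=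
  ∑' n : ℕ, ENNReal.ofReal (jap n ^ (2 * s) * ‖a n‖ ^ 2)

lemma sobolevNormSq_twoModeSolution_zero {α β : ℝ} {N : ℕ} (hN : 0 < N) (s c b : ℝ) :
    sobolevNormSq s (twoModeSolution α β N c b 0) =
      ENNReal.ofReal (c ^ 2) + ENNReal.ofReal (jap N ^ (2 * s) * b ^ 2) := by
  rw [sobolevNormSq, tsum_eq_sum (s := {0, N}), sum_pair hN.ne]
  · simp [twoModeSolution_zero_apply_zero, norm_twoModeSolution_apply_self hN, jap]
  · intro n hn
    simp only [mem_insert, mem_singleton, not_or] at hn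
    simp [twoModeSolution_zero_apply_of_ne hn.1 hn.2]

end

/-- Mathlib's `(0 : ℝ) ^ β = 0` for `β ≠ 0` matches the convention `0^β := 0`. -/
theorem norm_inflation_torus (α β s σ : ℝ) (hα : 0 < α) (hβ : 0 < β) :
    ∃ ε₀ : ℝ, ε₀ ∈ Set.Ioo (0 : ℝ) 1 ∧
      ∀ ε ∈ Set.Ioo (0 : ℝ) ε₀,
        ∃ N : ℕ, 3 ≤ N ∧
        ∃ φh : ℕ → ℂ, (∀ n : ℕ, n ≠ 0 → n ≠ N → φh n = 0) ∧
          (∑' n : ℕ, ENNReal.ofReal (jap (n : ℝ) ^ (2 * s) * ‖φh n‖ ^ 2))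
              < ENNReal.ofReal (ε ^ 2) ∧
        ∃ T : ℝ, 0 < T ∧ T < ε ∧
        ∃ a : ℝ → ℕ → ℂ,
          -- initial datum
          (∀ n : ℕ, a 0 n = φh n) ∧
          -- (i) the ODE system `∂ₜ a(t,n) + i n^α a(t,n) = ∑_{n₁+n₂=n} a(t,n₁) n₂^β a(t,n₂)`
          (∀ n : ℕ, ∀ t ∈ Set.Icc (0 : ℝ) T,
            HasDerivWithinAt (fun τ => a τ n)
              (-(Complex.I * (((n : ℝ) ^ α : ℝ) : ℂ) * a t n) +
                ∑ p ∈ Finset.HasAntidiagonal.antidiagonal n,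
                  a t p.1 * (((p.2 : ℝ) ^ β : ℝ) : ℂ) * a t p.2)
              (Set.Icc (0 : ℝ) T) t) ∧
          -- (ii) norm inflation in `H^σ` at time `T`
          (∑' n : ℕ, ENNReal.ofReal (jap (n : ℝ) ^ (2 * σ) * ‖a T n‖ ^ 2))
              > ENNReal.ofReal ((ε ^ 2)⁻¹) := by
  refine ⟨1 / 2, by norm_num, fun ε ⟨hε, _⟩ => ?_⟩
  have hgrowth := (tendsto_jap_rpow_mul_exp (2 * σ - 2 * s) (by positivity : 0 < ε ^ 2 / 2)
    hβ).comp tendsto_natCast_atTop_atTop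
  obtain ⟨N, hN, hN3⟩ :=
    ((hgrowth.eventually_gt_atTop (4 / ε ^ 4)).and (eventually_ge_atTop 3)).exists
  have hN₀ : 0 < N := by omega
  set a := twoModeSolution α β N (ε / 2 : ℝ) (ε / 2 * jap N ^ (-s) : ℝ)
  refine ⟨N, hN3, a 0, fun n => twoModeSolution_zero_apply_of_ne, ?_, ε / 2, by positivity,
    by linarith, a, fun _ => rfl,
    fun n t _ => (hasDerivAt_twoModeSolution hα hβ hN₀ n t).hasDerivWithinAt, ?_⟩
  · change sobolevNormSq s (a 0) < _
    rw [sobolevNormSq_twoModeSolution_zero hN₀, rpow_two_mul_mul_sq_mul_rpow_neg (jap_pos _),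
      sub_self, Real.rpow_zero, mul_one, ← ENNReal.ofReal_add (by positivity) (by positivity),
      ENNReal.ofReal_lt_ofReal_iff (by positivity)]
    nlinarith
  · refine lt_of_lt_of_le ?_ (ENNReal.le_tsum N)
    have hb : 0 < ε / 2 * jap N ^ (-s) :=
      mul_pos (by positivity) (Real.rpow_pos_of_pos (jap_pos _) _)
    rw [norm_twoModeSolution_apply_self hN₀, abs_of_pos hb, ← mul_assoc,
      rpow_two_mul_mul_sq_mul_rpow_neg (jap_pos _),
      ENNReal.ofReal_lt_ofReal_iff_of_nonneg (by positivity)]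
    calc (ε ^ 2)⁻¹ = ε ^ 2 / 4 * (4 / ε ^ 4) := by field_simp
      _ < ε ^ 2 / 4 * (jap N ^ (2 * σ - 2 * s) * Real.exp (ε ^ 2 / 2 * (N : ℝ) ^ β)) := by
        gcongr; exact hN
      _ = _ := by
        rw [mul_pow, ← Real.exp_nat_mul]
        ring_nf
end

section
/- Let α, β, θ > 0, ε > 0, and N ∈ ℕ with N ≥ 1, and let g_k be the low-frequency iterates defined in the context. Then for every t > 0, every ξ ∈ ℝ, and every k ∈ ℕ, one has |g_k(t, ξ)| ≤ ε (π² 2^β ε t)^{k−1} ((k−1)!)^{max(0, β−1)} N^{θβ + θ(−β + 1/2)k} · (1_{[N^{−θ}, 2N^{−θ}]})^{*(k)}(ξ). -/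
open MeasureTheory

/-- The Picard iterates on the Fourier side for `∂ₜu + iD^α u = u D^β u` with datum `F`. -/
noncomputable def picard (α β : ℝ) (F : ℝ → ℂ) : ℕ → ℝ → ℝ → ℂ
  | 0 => fun _ _ => 0
  | 1 => fun t ξ => Complex.exp (-Complex.I * (t : ℂ) * ((|ξ| ^ α : ℝ) : ℂ)) * F ξ
  | (k + 2) => fun t ξ =>
      ∑ i ∈ (Finset.range (k + 1)).attach,
        ∫ t' in (0:ℝ)..t,
          Complex.exp (-Complex.I * ((t - t' : ℝ) : ℂ) * ((|ξ| ^ α : ℝ) : ℂ)) *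
            ∫ η : ℝ, picard α β F (i.1 + 1) t' (ξ - η) * ((|η| ^ β : ℝ) : ℂ) *
              picard α β F (k + 1 - i.1) t' η
  termination_by k => k
  decreasing_by
  all_goals (have h := i.2; simp only [Finset.mem_range] at h; omega)

/-- `convPow g n f = g^{*(n)} * f`, where `g^{*(0)}` is interpreted as the Dirac mass at `0`.
In particular `g^{*(k)} = convPow g (k-1) g` for `k ≥ 1`. -/
noncomputable def convPow (g : ℝ → ℝ) : ℕ → (ℝ → ℝ) → ℝ → ℝ
  | 0, f => f
  | (n + 1), f => fun x => ∫ y : ℝ, convPow g n f (x - y) * g y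

variable {c : ℝ}

/-- abbreviation for the indicator -/
noncomputable def indc (c : ℝ) : ℝ → ℝ := Set.indicator (Set.Icc c (2*c)) (fun _ => (1:ℝ))

noncomputable def hv (c : ℝ) (n : ℕ) : ℝ → ℝ := convPow (indc c) n (indc c)

lemma hv_zero : hv c 0 = indc c := rfl

lemma hv_succ (n : ℕ) (x : ℝ) : hv c (n+1) x = ∫ y : ℝ, hv c n (x - y) * indc c y := rfl

lemma indc_nonneg (x : ℝ) : 0 ≤ indc c x := Set.indicator_nonneg (fun _ _ => zero_le_one) x

lemma indc_le_one (x : ℝ) : indc c x ≤ 1 := by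
  unfold indc
  by_cases h : x ∈ Set.Icc c (2*c)
  · rw [Set.indicator_of_mem h]
  · rw [Set.indicator_of_notMem h]; norm_num

lemma indc_meas : Measurable (indc c) :=
  (measurable_const.indicator measurableSet_Icc)

lemma indc_mem (x : ℝ) (hx : indc c x ≠ 0) : c ≤ x ∧ x ≤ 2*c := by
  by_contra h
  exact hx (Set.indicator_of_notMem (by simpa [Set.mem_Icc] using h) _)

lemma indc_integrable (hc : 0 < c) : Integrable (indc c) := by
  rw [indc, integrable_indicator_iff measurableSet_Icc]
  exact integrableOn_const (by rw [Real.volume_Icc]; exact ENNReal.ofReal_ne_top) (by simp)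

lemma indc_integral (hc : 0 < c) : ∫ x : ℝ, indc c x = c := by
  rw [indc]
  rw [show (fun _ => (1:ℝ)) = (1 : ℝ → ℝ) from rfl]
  rw [integral_indicator_one measurableSet_Icc]
  rw [measureReal_def, Real.volume_Icc, ENNReal.toReal_ofReal (by linarith)]
  ring

lemma hv_meas (n : ℕ) : Measurable (hv c n) := by
  induction n with
  | zero => exact indc_meas
  | succ n ih =>
    have : Measurable (fun p : ℝ × ℝ => hv c n (p.1 - p.2) * indc c p.2) :=
      (ih.comp (measurable_fst.sub measurable_snd)).mul (indc_meas.comp measurable_snd)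
    have := (this.stronglyMeasurable.integral_prod_right' (ν := volume)).measurable
    exact this

lemma hv_nonneg (n : ℕ) (x : ℝ) : 0 ≤ hv c n x := by
  induction n generalizing x with
  | zero => exact indc_nonneg x
  | succ n ih =>
    rw [hv_succ]
    exact integral_nonneg fun y => mul_nonneg (ih _) (indc_nonneg _)

lemma hv_le (hc : 0 < c) (n : ℕ) (x : ℝ) : hv c n x ≤ c ^ n := by
  induction n generalizing x with
  | zero => exact indc_le_one x
  | succ n ih =>
    rw [hv_succ]
    calc ∫ y : ℝ, hv c n (x - y) * indc c y ≤ ∫ y : ℝ, c ^ n * indc c y := by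
          refine integral_mono_of_nonneg (Filter.Eventually.of_forall fun y => mul_nonneg (hv_nonneg _ _) (indc_nonneg _)) ((indc_integrable hc).const_mul _) (Filter.Eventually.of_forall fun y => ?_)
          exact mul_le_mul_of_nonneg_right (ih _) (indc_nonneg _)
      _ = c ^ n * c := by rw [MeasureTheory.integral_const_mul, indc_integral hc]
      _ = c ^ (n+1) := by ring

lemma hv_supp (hc : 0 < c) (n : ℕ) (x : ℝ) (hx : hv c n x ≠ 0) :
    (n+1 : ℝ) * c ≤ x ∧ x ≤ 2 * (n+1 : ℝ) * c := by
  induction n generalizing x with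
  | zero =>
    have := indc_mem x hx
    push_cast
    constructor <;> [linarith [this.1]; linarith [this.2]]
  | succ n ih =>
    by_contra hcon
    apply hx
    rw [hv_succ]
    have : ∀ y : ℝ, hv c n (x - y) * indc c y = 0 := by
      intro y
      by_cases h1 : indc c y = 0
      · rw [h1, mul_zero]
      by_cases h2 : hv c n (x - y) = 0
      · rw [h2, zero_mul]
      exfalso
      have hy := indc_mem y h1
      have hz := ih (x - y) h2
      push_neg at hcon
      push_cast at hcon hz ⊢
      rcases lt_or_ge x ((n+1+1:ℝ)*c) with h | h
      · linarith [hz.1, hy.1]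
      · have := hcon h; linarith [hz.2, hy.2]
    simp [this]

lemma hv_le_ind (hc : 0 < c) (n : ℕ) (x : ℝ) :
    hv c n x ≤ c ^ n * Set.indicator (Set.Icc ((n+1:ℝ)*c) (2*(n+1:ℝ)*c)) (fun _ => (1:ℝ)) x := by
  by_cases h : hv c n x = 0
  · rw [h]
    exact mul_nonneg (pow_nonneg hc.le n) (Set.indicator_nonneg (fun _ _ => zero_le_one) x)
  · have hm := hv_supp hc n x h
    rw [Set.indicator_of_mem (Set.mem_Icc.2 hm), mul_one]
    exact hv_le hc n x

lemma hv_integrable (hc : 0 < c) (n : ℕ) : Integrable (hv c n) := by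
  refine Integrable.mono' (g := fun x => c ^ n * Set.indicator (Set.Icc ((n+1:ℝ)*c) (2*(n+1:ℝ)*c)) (fun _ => (1:ℝ)) x) ?_ (hv_meas n).aestronglyMeasurable (Filter.Eventually.of_forall fun x => ?_)
  · refine Integrable.const_mul ?_ _
    rw [integrable_indicator_iff measurableSet_Icc]
    exact integrableOn_const (by rw [Real.volume_Icc]; exact ENNReal.ofReal_ne_top) (by simp)
  · rw [Real.norm_eq_abs, abs_of_nonneg (hv_nonneg n x)]
    exact hv_le_ind hc n x

lemma hv_conv (hc : 0 < c) (a b : ℕ) (ξ : ℝ) :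
    ∫ η : ℝ, hv c a (ξ - η) * hv c b η = hv c (a + b + 1) ξ := by
  induction b generalizing ξ with
  | zero => exact (hv_succ a ξ).symm
  | succ b ih =>
    have key : ∀ η : ℝ, hv c a (ξ - η) * hv c (b+1) η
        = ∫ y : ℝ, hv c a (ξ - η) * (hv c b (η - y) * indc c y) := by
      intro η
      rw [hv_succ, MeasureTheory.integral_const_mul]
    rw [MeasureTheory.integral_congr_ae (Filter.Eventually.of_forall key)]
    have hf_int : Integrable (Function.uncurry
        (fun η y : ℝ => hv c a (ξ - η) * (hv c b (η - y) * indc c y))) (volume.prod volume) := by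
      have hbd : Integrable (fun p : ℝ × ℝ =>
          (c^a*c^b) * (Set.indicator (Set.Icc ((b+2:ℝ)*c) (2*((b+2:ℝ)*c))) (fun _ => (1:ℝ)) p.1 * indc c p.2)) (volume.prod volume) := by
        refine Integrable.const_mul ?_ _
        refine Integrable.mul_prod ?_ (indc_integrable hc)
        rw [integrable_indicator_iff measurableSet_Icc]
        exact integrableOn_const (by rw [Real.volume_Icc]; exact ENNReal.ofReal_ne_top) (by simp)
      refine hbd.mono' ?_ (Filter.Eventually.of_forall fun p => ?_)
      · refine AEStronglyMeasurable.mul ?_ (AEStronglyMeasurable.mul ?_ ?_)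
        · exact ((hv_meas a).comp ((measurable_const.sub measurable_fst))).aestronglyMeasurable
        · exact ((hv_meas b).comp ((measurable_fst.sub measurable_snd))).aestronglyMeasurable
        · exact (indc_meas.comp measurable_snd).aestronglyMeasurable
      · obtain ⟨η, y⟩ := p
        simp only [Function.uncurry]
        rw [Real.norm_eq_abs, abs_of_nonneg (mul_nonneg (hv_nonneg _ _) (mul_nonneg (hv_nonneg _ _) (indc_nonneg _)))]
        by_cases h1 : indc c y = 0
        · rw [h1, mul_zero, mul_zero, mul_zero]; positivity
        by_cases h2 : hv c b (η - y) = 0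
        · rw [h2, zero_mul, mul_zero]
          exact mul_nonneg (mul_nonneg (pow_nonneg hc.le _) (pow_nonneg hc.le _)) (mul_nonneg (Set.indicator_nonneg (fun _ _ => zero_le_one) _) (indc_nonneg _))
        have hy := indc_mem y h1
        have hz := hv_supp hc b (η - y) h2
        have hmem : η ∈ Set.Icc ((b+2:ℝ)*c) (2*((b+2:ℝ)*c)) := by
          push_cast at hz
          constructor <;> [nlinarith [hz.1, hy.1]; nlinarith [hz.2, hy.2]]
        rw [Set.indicator_of_mem hmem]
        calc hv c a (ξ - η) * (hv c b (η - y) * indc c y)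
            ≤ c^a * (c^b * indc c y) := by
              refine mul_le_mul (hv_le hc a _) ?_ (mul_nonneg (hv_nonneg _ _) (indc_nonneg _)) (pow_nonneg hc.le _)
              exact mul_le_mul_of_nonneg_right (hv_le hc b _) (indc_nonneg _)
          _ = c^a*c^b * (1 * indc c y) := by ring
    rw [MeasureTheory.integral_integral_swap hf_int]
    have inner : ∀ y : ℝ, (∫ η : ℝ, hv c a (ξ - η) * (hv c b (η - y) * indc c y))
        = hv c (a+b+1) (ξ - y) * indc c y := by
      intro y
      have : ∀ η : ℝ, hv c a (ξ - η) * (hv c b (η - y) * indc c y)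
          = (fun z : ℝ => hv c a ((ξ - y) - z) * hv c b z * indc c y) (η - y) := by
        intro η
        simp only []
        ring_nf
      rw [MeasureTheory.integral_congr_ae (Filter.Eventually.of_forall this),
        MeasureTheory.integral_sub_right_eq_self (fun z : ℝ => hv c a ((ξ - y) - z) * hv c b z * indc c y) y]
      rw [MeasureTheory.integral_mul_const, ih (ξ - y)]
    rw [MeasureTheory.integral_congr_ae (Filter.Eventually.of_forall inner)]
    exact (hv_succ (a+b+1) ξ).symm

section Comb
open Finset
lemma choose_lb : ∀ s r : ℕ, 1 ≤ r → r < s → s ≤ s.choose r := by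
  intro s
  induction s with
  | zero => intro r h1 h2; omega
  | succ s ih =>
    intro r h1 h2
    rcases eq_or_lt_of_le (Nat.lt_succ_iff.mp h2) with h | h
    · rw [h, Nat.choose_succ_self_right]
    · obtain ⟨r', rfl⟩ : ∃ r', r = r' + 1 := ⟨r - 1, by omega⟩
      rw [Nat.choose_succ_succ]
      have h1' : 1 ≤ Nat.choose s r' := Nat.choose_pos (by omega)
      have h2' : s ≤ Nat.choose s (r' + 1) := ih (r'+1) h1 h
      simp only [Nat.succ_eq_add_one]
      omega

lemma fact_mul_fact_le (n i : ℕ) (h : i < n) :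
    Nat.factorial (i+1) * Nat.factorial (n-i) ≤ Nat.factorial n := by
  have hle : i + 1 ≤ n + 1 := by omega
  have e := Nat.choose_mul_factorial_mul_factorial hle
  rw [mul_assoc] at e
  have hni : n + 1 - (i+1) = n - i := by omega
  rw [hni] at e
  have hcb : n + 1 ≤ (n+1).choose (i+1) := choose_lb (n+1) (i+1) (by omega) (by omega)
  have : (n+1) * (Nat.factorial (i+1) * Nat.factorial (n-i)) ≤ (n+1) * Nat.factorial n := by
    calc (n+1) * (Nat.factorial (i+1) * Nat.factorial (n-i))
        ≤ (n+1).choose (i+1) * (Nat.factorial (i+1) * Nat.factorial (n-i)) :=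
          Nat.mul_le_mul_right _ hcb
      _ = Nat.factorial (n+1) := e
      _ = (n+1) * Nat.factorial n := rfl
  exact Nat.le_of_mul_le_mul_left this (by omega)

lemma sum_inv_sq : ∀ n : ℕ, 1 ≤ n → ∑ i ∈ range n, (1:ℝ)/(((i:ℝ)+1)^2) ≤ 2 - 1/(n:ℝ) := by
  intro n
  induction n with
  | zero => intro h; omega
  | succ n ih =>
    intro _
    rcases Nat.eq_zero_or_pos n with rfl | hn
    · norm_num
    · rw [Finset.sum_range_succ]
      have h1 : (0:ℝ) < n := by exact_mod_cast hn
      have key : (1:ℝ)/(((n:ℝ)+1)^2) ≤ 1/(n:ℝ) - 1/((n:ℝ)+1) := by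
        rw [div_sub_div _ _ (by positivity) (by positivity)]
        rw [div_le_div_iff₀ (by positivity) (by positivity)]
        ring_nf
        nlinarith
      have := ih hn
      push_cast
      linarith

lemma sum_inv_one : ∀ n : ℕ, ∑ i ∈ range n, (1:ℝ)/((i:ℝ)+1) ≤ n := by
  intro n
  calc ∑ i ∈ range n, (1:ℝ)/((i:ℝ)+1) ≤ ∑ i ∈ range n, (1:ℝ) := by
        refine Finset.sum_le_sum fun i _ => ?_
        rw [div_le_one (by positivity)]
        norm_num
    _ = n := by simp

lemma sum_inv_rev (n : ℕ) : ∑ i ∈ range n, (1:ℝ)/(((n-i : ℕ):ℝ)) ≤ n := by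
  have : ∑ i ∈ range n, (1:ℝ)/(((n-i : ℕ):ℝ)) = ∑ i ∈ range n, (1:ℝ)/((i:ℝ)+1) := by
    rw [← Finset.sum_range_reflect (fun j => (1:ℝ)/((j:ℝ)+1)) n]
    refine Finset.sum_congr rfl fun i hi => ?_
    rw [Finset.mem_range] at hi
    congr 1
    have : n - i = (n - 1 - i) + 1 := by omega
    rw [this]
    push_cast
    ring
  rw [this]
  exact sum_inv_one n

lemma sum_triple (n : ℕ) (hn : 1 ≤ n) :
    ∑ i ∈ range n, (1:ℝ)/(((i:ℝ)+1)^2 * ((n-i : ℕ):ℝ)) ≤ (4*(n:ℝ)+2)/((n:ℝ)+1)^2 := by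
  have hJ : (0:ℝ) < (n:ℝ)+1 := by positivity
  have key : ∀ i ∈ range n, (1:ℝ)/(((i:ℝ)+1)^2 * ((n-i : ℕ):ℝ))
      = (1/((n:ℝ)+1)^2) * (1/((n-i:ℕ):ℝ)) + (1/((n:ℝ)+1)^2) * (1/((i:ℝ)+1))
        + (1/((n:ℝ)+1)) * (1/(((i:ℝ)+1)^2)) := by
    intro i hi
    rw [Finset.mem_range] at hi
    have hK2 : ((n-i:ℕ):ℝ) = (n:ℝ) - (i:ℝ) := by
      push_cast [Nat.cast_sub hi.le]; ring
    have h1 : (0:ℝ) < (i:ℝ)+1 := by positivity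
    have h2 : (0:ℝ) < ((n-i:ℕ):ℝ) := by
      have : 1 ≤ n - i := by omega
      exact_mod_cast Nat.lt_of_lt_of_le Nat.zero_lt_one this
    rw [hK2] at h2 ⊢
    field_simp
    ring
  rw [Finset.sum_congr rfl key]
  rw [Finset.sum_add_distrib, Finset.sum_add_distrib, ← Finset.mul_sum, ← Finset.mul_sum, ← Finset.mul_sum]
  have b1 := sum_inv_rev n
  have b2 := sum_inv_one n
  have b3 : ∑ i ∈ range n, (1:ℝ)/(((i:ℝ)+1)^2) ≤ 2 := by
    have h := sum_inv_sq n hn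
    have h2 : (0:ℝ) < (n:ℝ) := by exact_mod_cast hn
    have h3 : (0:ℝ) ≤ 1/(n:ℝ) := by positivity
    linarith
  have e1 : (0:ℝ) ≤ 1/((n:ℝ)+1)^2 := by positivity
  have e2 : (0:ℝ) ≤ 1/((n:ℝ)+1) := by positivity
  calc (1/((n:ℝ)+1)^2) * (∑ i ∈ range n, 1/((n-i:ℕ):ℝ))
        + (1/((n:ℝ)+1)^2) * (∑ i ∈ range n, 1/((i:ℝ)+1))
        + (1/((n:ℝ)+1)) * (∑ i ∈ range n, 1/(((i:ℝ)+1)^2))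
      ≤ (1/((n:ℝ)+1)^2) * n + (1/((n:ℝ)+1)^2) * n + (1/((n:ℝ)+1)) * 2 := by
        gcongr
    _ = (4*(n:ℝ)+2)/((n:ℝ)+1)^2 - 0 := by
        field_simp
        ring
    _ ≤ (4*(n:ℝ)+2)/((n:ℝ)+1)^2 := by linarith

lemma comb_key (β : ℝ) (hβ : 0 < β) (n : ℕ) (hn : 1 ≤ n) :
    ∑ i ∈ range n,
      ((Nat.factorial i : ℝ) * (Nat.factorial (n-1-i) : ℝ)) ^ (max 0 (β-1))
        * ((n-i : ℕ) : ℝ) ^ β / (((i:ℝ)+1)^2 * ((n-i : ℕ) : ℝ)^2 * (n:ℝ))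
      ≤ Real.pi^2 * (Nat.factorial n : ℝ) ^ (max 0 (β-1)) / (((n:ℕ):ℝ)+1)^2 := by
  set m := max 0 (β-1) with hm
  have hm0 : 0 ≤ m := le_max_left _ _
  have hβm : β ≤ m + 1 := by
    rcases le_total β 1 with h | h
    · have : m = max 0 (β-1) := hm
      calc β ≤ 1 := h
        _ ≤ m + 1 := by linarith
    · have : β - 1 ≤ m := le_max_right _ _
      linarith
  have hn' : (0:ℝ) < (n:ℝ) := by exact_mod_cast hn
  -- termwise bound
  have step : ∀ i ∈ range n,
      ((Nat.factorial i : ℝ) * (Nat.factorial (n-1-i) : ℝ)) ^ m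
        * ((n-i : ℕ) : ℝ) ^ β / (((i:ℝ)+1)^2 * ((n-i : ℕ) : ℝ)^2 * (n:ℝ))
      ≤ ((Nat.factorial n : ℝ) ^ m / (n:ℝ)) * (1/(((i:ℝ)+1)^2 * ((n-i : ℕ):ℝ))) := by
    intro i hi
    rw [Finset.mem_range] at hi
    set K1 : ℝ := (i:ℝ)+1 with hK1def
    set K2 : ℝ := ((n-i : ℕ):ℝ) with hK2def
    have hK1 : (1:ℝ) ≤ K1 := by
      have : (0:ℝ) ≤ (i:ℝ) := Nat.cast_nonneg i
      rw [hK1def]; linarith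
    have hK2 : (1:ℝ) ≤ K2 := by
      have h' : 1 ≤ n - i := by omega
      rw [hK2def]
      exact_mod_cast h'
    have hK1p : (0:ℝ) < K1 := by linarith
    have hK2p : (0:ℝ) < K2 := by linarith
    -- factorial bound in ℝ
    have hfac : ((Nat.factorial i : ℝ) * (Nat.factorial (n-1-i) : ℝ))
        ≤ (Nat.factorial n : ℝ) / (K1 * K2) := by
      rw [le_div_iff₀ (by positivity)]
      have e1 : (Nat.factorial i : ℝ) * K1 = (Nat.factorial (i+1) : ℝ) := by
        rw [Nat.factorial_succ]; push_cast; ring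
      have e2 : (Nat.factorial (n-1-i) : ℝ) * K2 = (Nat.factorial (n-i) : ℝ) := by
        have h' : n - i = (n-1-i) + 1 := by omega
        rw [h', Nat.factorial_succ, hK2def, h']
        push_cast; ring
      calc (Nat.factorial i : ℝ) * (Nat.factorial (n-1-i) : ℝ) * (K1 * K2)
          = ((Nat.factorial i : ℝ) * K1) * ((Nat.factorial (n-1-i) : ℝ) * K2) := by ring
        _ = (Nat.factorial (i+1) : ℝ) * (Nat.factorial (n-i) : ℝ) := by rw [e1, e2]
        _ ≤ (Nat.factorial n : ℝ) := by exact_mod_cast fact_mul_fact_le n i hi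
    have hXnn : (0:ℝ) ≤ (Nat.factorial i : ℝ) * (Nat.factorial (n-1-i) : ℝ) := by positivity
    have hrp : ((Nat.factorial i : ℝ) * (Nat.factorial (n-1-i) : ℝ)) ^ m
        ≤ (Nat.factorial n : ℝ) ^ m / (K1 ^ m * K2 ^ m) := by
      calc ((Nat.factorial i : ℝ) * (Nat.factorial (n-1-i) : ℝ)) ^ m
          ≤ ((Nat.factorial n : ℝ) / (K1 * K2)) ^ m := Real.rpow_le_rpow hXnn hfac hm0
        _ = (Nat.factorial n : ℝ) ^ m / (K1 * K2) ^ m := by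
            rw [Real.div_rpow (by positivity) _ m]
            positivity
        _ = (Nat.factorial n : ℝ) ^ m / (K1 ^ m * K2 ^ m) := by
            rw [Real.mul_rpow hK1p.le hK2p.le]
    have hK2β : K2 ^ β ≤ K2 ^ m * K2 := by
      calc K2 ^ β ≤ K2 ^ (m+1) := Real.rpow_le_rpow_of_exponent_le hK2 hβm
        _ = K2 ^ m * K2 := by rw [Real.rpow_add hK2p, Real.rpow_one]
    have hK1m : (1:ℝ) ≤ K1 ^ m := by
      calc (1:ℝ) = (1:ℝ) ^ m := (Real.one_rpow m).symm
        _ ≤ K1 ^ m := Real.rpow_le_rpow zero_le_one hK1 hm0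
    -- combine numerator
    have hnum : ((Nat.factorial i : ℝ) * (Nat.factorial (n-1-i) : ℝ)) ^ m * K2 ^ β
        ≤ (Nat.factorial n : ℝ) ^ m * K2 := by
      calc ((Nat.factorial i : ℝ) * (Nat.factorial (n-1-i) : ℝ)) ^ m * K2 ^ β
          ≤ ((Nat.factorial n : ℝ) ^ m / (K1 ^ m * K2 ^ m)) * (K2 ^ m * K2) := by
            refine mul_le_mul hrp hK2β (by positivity) (by positivity)
        _ = ((Nat.factorial n : ℝ) ^ m * K2) / K1 ^ m := by
            field_simp
        _ ≤ (Nat.factorial n : ℝ) ^ m * K2 := by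
            refine div_le_self (by positivity) hK1m
    calc ((Nat.factorial i : ℝ) * (Nat.factorial (n-1-i) : ℝ)) ^ m * K2 ^ β / (K1^2 * K2^2 * (n:ℝ))
        ≤ ((Nat.factorial n : ℝ) ^ m * K2) / (K1^2 * K2^2 * (n:ℝ)) := by
          gcongr
      _ = ((Nat.factorial n : ℝ) ^ m / (n:ℝ)) * (1/(K1^2 * K2)) := by
          field_simp
  have hpi : 4*(n:ℝ)+2 ≤ Real.pi^2 * (n:ℝ) := by
    have h9 : (9:ℝ) ≤ Real.pi^2 := by nlinarith [Real.pi_gt_three, sq_nonneg (Real.pi - 3)]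
    have hn1 : (1:ℝ) ≤ (n:ℝ) := by exact_mod_cast hn
    have h2 := mul_le_mul_of_nonneg_right h9 (le_trans zero_le_one hn1)
    linarith
  have hF : (0:ℝ) ≤ (Nat.factorial n : ℝ)^m := by positivity
  calc ∑ i ∈ range n,
      ((Nat.factorial i : ℝ) * (Nat.factorial (n-1-i) : ℝ)) ^ m
        * ((n-i : ℕ) : ℝ) ^ β / (((i:ℝ)+1)^2 * ((n-i : ℕ) : ℝ)^2 * (n:ℝ))
      ≤ ∑ i ∈ range n, ((Nat.factorial n:ℝ)^m/(n:ℝ)) * (1/(((i:ℝ)+1)^2*((n-i:ℕ):ℝ))) :=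
        Finset.sum_le_sum step
    _ = ((Nat.factorial n:ℝ)^m/(n:ℝ)) * ∑ i ∈ range n, (1:ℝ)/(((i:ℝ)+1)^2*((n-i:ℕ):ℝ)) :=
        (Finset.mul_sum _ _ _).symm
    _ ≤ ((Nat.factorial n:ℝ)^m/(n:ℝ)) * ((4*(n:ℝ)+2)/(((n:ℝ))+1)^2) :=
        mul_le_mul_of_nonneg_left (sum_triple n hn) (by positivity)
    _ ≤ Real.pi^2 * (Nat.factorial n:ℝ)^m / (((n:ℝ))+1)^2 := by
        rw [div_mul_div_comm, div_le_div_iff₀ (by positivity) (by positivity)]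
        have hmul : ((Nat.factorial n:ℝ)^m * (((n:ℝ)+1)^2)) * (4*(n:ℝ)+2)
            ≤ ((Nat.factorial n:ℝ)^m * (((n:ℝ)+1)^2)) * (Real.pi^2 * (n:ℝ)) :=
          mul_le_mul_of_nonneg_left hpi (by positivity)
        nlinarith [hmul]


end Comb

lemma abs_exp_phase (s x : ℝ) :
    ‖Complex.exp (-Complex.I * (s:ℂ) * ((x:ℝ):ℂ))‖ = 1 := by
  rw [Complex.norm_exp]
  simp [Complex.mul_re]

set_option maxHeartbeats 1000000 in
lemma main_bound (α β θ ε : ℝ) (hβ : 0 < β) (hθ : 0 < θ) (hε : 0 < ε) (N : ℕ) (hN : 1 ≤ N) :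
    ∀ k : ℕ, 1 ≤ k → ∀ t : ℝ, 0 ≤ t → ∀ ξ : ℝ,
      ‖picard α β
          (fun x => ((ε * (N : ℝ) ^ (θ / 2) * indc ((N:ℝ)^(-θ)) x : ℝ) : ℂ)) k t ξ‖
        ≤ (1/(k:ℝ)^2) * (ε * (Real.pi ^ 2 * 2 ^ β * ε * t) ^ (k - 1) *
            ((Nat.factorial (k - 1) : ℝ)) ^ (max 0 (β - 1)) *
            (N : ℝ) ^ (θ * β + θ * (-β + 1 / 2) * (k : ℝ))) *
            hv ((N:ℝ)^(-θ)) (k-1) ξ := by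
  have hN0 : (0:ℝ) < N := by exact_mod_cast Nat.lt_of_lt_of_le Nat.zero_lt_one hN
  set c : ℝ := (N:ℝ)^(-θ) with hcdef
  have hc : 0 < c := Real.rpow_pos_of_pos hN0 _
  set m : ℝ := max 0 (β-1) with hmdef
  have hm0 : 0 ≤ m := le_max_left _ _
  set D : ℝ := Real.pi^2 * 2^β * ε with hDdef
  have hD : 0 < D := by positivity
  set F : ℝ → ℂ := fun x => ((ε * (N : ℝ) ^ (θ / 2) * indc c x : ℝ) : ℂ) with hFdef
  intro k
  induction k using Nat.strong_induction_on with
  | _ k IH =>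
  intro hk t ht ξ
  rcases k with _ | (_ | k')
  · exact absurd hk (by omega)
  · -- k = 1
    show ‖picard α β F 1 t ξ‖
        ≤ (1/((1:ℕ):ℝ)^2) * (ε * (D * t) ^ (1-1) *
            ((Nat.factorial (1-1) : ℝ)) ^ m * (N:ℝ)^(θ*β + θ*(-β+1/2)*((1:ℕ):ℝ))) * hv c (1-1) ξ
    rw [picard.eq_2, norm_mul, abs_exp_phase, one_mul]
    have hFabs : ‖F ξ‖ = ε * (N:ℝ)^(θ/2) * indc c ξ := by
      rw [hFdef, Complex.norm_real, Real.norm_eq_abs]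
      exact abs_of_nonneg (mul_nonneg (by positivity) (indc_nonneg ξ))
    rw [hFabs]
    have hexp : θ*β + θ*(-β+1/2)*((1:ℕ):ℝ) = θ/2 := by push_cast; ring
    rw [hexp]
    simp only [show (1:ℕ)-1 = 0 from rfl, pow_zero, Nat.factorial_zero, Nat.cast_one,
      Real.one_rpow]
    rw [show hv c 0 = indc c from rfl]
    exact le_of_eq (by ring)
  · -- k = k' + 2
    simp only [show k'+1+1 = k'+2 from rfl]
    have hsub : k' + 2 - 1 = k' + 1 := rfl
    rw [hsub]
    rw [picard.eq_3]
    refine le_trans (norm_sum_le _ _) ?_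
    rw [Finset.sum_attach _ (fun i => ‖∫ t' in (0:ℝ)..t,
          Complex.exp (-Complex.I * ((t - t' : ℝ) : ℂ) * ((|ξ| ^ α : ℝ) : ℂ)) *
            ∫ η : ℝ, picard α β F (i + 1) t' (ξ - η) * ((|η| ^ β : ℝ) : ℂ) *
              picard α β F (k' + 1 - i) t' η‖)]
    set n : ℕ := k' + 1 with hndef
    have hn1 : 1 ≤ n := Nat.le_add_left 1 k'
    have hnR : (0:ℝ) < (n:ℝ) := by exact_mod_cast hn1
    set E : ℝ := θ*β + θ*(-β+1/2)*((k'+2 : ℕ) : ℝ) with hEdef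
    set C0 : ℝ := ε^2 * D^k' * 2^β * ((N:ℝ)^(θ*β + E) * c^β) * t^n * hv c n ξ with hC0def
    have hC0nn : 0 ≤ C0 := by
      refine mul_nonneg ?_ (hv_nonneg _ _)
      positivity
    have key : ∀ i ∈ Finset.range n, ‖∫ t' in (0:ℝ)..t,
          Complex.exp (-Complex.I * ((t - t' : ℝ) : ℂ) * ((|ξ| ^ α : ℝ) : ℂ)) *
            ∫ η : ℝ, picard α β F (i + 1) t' (ξ - η) * ((|η| ^ β : ℝ) : ℂ) *
              picard α β F (k' + 1 - i) t' η‖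
        ≤ C0 * (((Nat.factorial i : ℝ) * (Nat.factorial (n-1-i) : ℝ)) ^ m
            * ((n-i : ℕ) : ℝ) ^ β / (((i:ℝ)+1)^2 * ((n-i : ℕ) : ℝ)^2 * (n:ℝ))) := by
      intro i hi
      rw [Finset.mem_range] at hi
      obtain ⟨j, hj⟩ : ∃ j : ℕ, k' = i + j := ⟨k' - i, by omega⟩
      have hk2 : k' + 1 - i = j + 1 := by omega
      have hn_i : n - i = j + 1 := by rw [hndef]; omega
      have hn_1_i : n - 1 - i = j := by rw [hndef]; omega
      rw [hk2, hn_1_i]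
      have IH1 : ∀ s : ℝ, 0 ≤ s → ∀ x : ℝ, ‖picard α β F (i+1) s x‖
          ≤ (1/((i:ℝ)+1)^2) * (ε * (D*s)^i * ((Nat.factorial i : ℝ))^m
              * (N:ℝ)^(θ*β+θ*(-β+1/2)*((i:ℝ)+1))) * hv c i x := by
        intro s hs x
        have h := IH (i+1) (by omega) (by omega) s hs x
        simp only [Nat.add_sub_cancel] at h
        push_cast at h
        exact h
      have IH2 : ∀ s : ℝ, 0 ≤ s → ∀ x : ℝ, ‖picard α β F (j+1) s x‖
          ≤ (1/((j:ℝ)+1)^2) * (ε * (D*s)^j * ((Nat.factorial j : ℝ))^m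
              * (N:ℝ)^(θ*β+θ*(-β+1/2)*((j:ℝ)+1))) * hv c j x := by
        intro s hs x
        have h := IH (j+1) (by omega) (by omega) s hs x
        simp only [Nat.add_sub_cancel] at h
        push_cast at h
        exact h
      set Mterm : ℝ := (1/((i:ℝ)+1)^2) * (1/((j:ℝ)+1)^2)
          * (ε^2 * D^k' * ((Nat.factorial i : ℝ))^m * ((Nat.factorial j : ℝ))^m
             * (N:ℝ)^(θ*β+θ*(-β+1/2)*((i:ℝ)+1)) * (N:ℝ)^(θ*β+θ*(-β+1/2)*((j:ℝ)+1)))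
          * ((2*((j:ℝ)+1)*c)^β * hv c n ξ) with hMdef
      have hjR : (0:ℝ) ≤ (j:ℝ) := Nat.cast_nonneg j
      have hiR : (0:ℝ) ≤ (i:ℝ) := Nat.cast_nonneg i
      have hMnn : 0 ≤ Mterm := by
        rw [hMdef]
        refine mul_nonneg (mul_nonneg (by positivity) (by positivity)) ?_
        refine mul_nonneg (Real.rpow_nonneg (by positivity) _) (hv_nonneg _ _)
      -- pointwise-in-time bound
      have hpt : ∀ t' ∈ Set.Icc (0:ℝ) t, ‖Complex.exp (-Complex.I * ((t - t' : ℝ) : ℂ) * ((|ξ| ^ α : ℝ) : ℂ)) *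
            ∫ η : ℝ, picard α β F (i + 1) t' (ξ - η) * ((|η| ^ β : ℝ) : ℂ) *
              picard α β F (j + 1) t' η‖
          ≤ Mterm * t'^k' := by
        intro t' ht'
        have ht'0 : 0 ≤ t' := ht'.1
        rw [norm_mul, abs_exp_phase, one_mul]
        set A1 : ℝ := (1/((i:ℝ)+1)^2) * (ε * (D*t')^i * ((Nat.factorial i : ℝ))^m
            * (N:ℝ)^(θ*β+θ*(-β+1/2)*((i:ℝ)+1))) with hA1def
        set A2 : ℝ := (1/((j:ℝ)+1)^2) * (ε * (D*t')^j * ((Nat.factorial j : ℝ))^m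
            * (N:ℝ)^(θ*β+θ*(-β+1/2)*((j:ℝ)+1))) with hA2def
        have hA1nn : 0 ≤ A1 := by
          have : (0:ℝ) ≤ D*t' := mul_nonneg hD.le ht'0
          rw [hA1def]
          positivity
        have hA2nn : 0 ≤ A2 := by
          have : (0:ℝ) ≤ D*t' := mul_nonneg hD.le ht'0
          rw [hA2def]
          positivity
        have hsupp2 : ∀ η : ℝ, |η|^β * hv c j η ≤ (2*((j:ℝ)+1)*c)^β * hv c j η := by
          intro η
          by_cases h0 : hv c j η = 0
          · rw [h0, mul_zero, mul_zero]
          · have hs := hv_supp hc j η h0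
            push_cast at hs
            have hη0 : (0:ℝ) ≤ η := by nlinarith [hs.1, hc.le]
            have hη : |η| ≤ 2*((j:ℝ)+1)*c := by
              rw [abs_of_nonneg hη0]
              nlinarith [hs.2]
            exact mul_le_mul_of_nonneg_right
              (Real.rpow_le_rpow (abs_nonneg η) hη hβ.le) (hv_nonneg _ _)
        have habsG : ∀ η : ℝ, ‖picard α β F (i+1) t' (ξ - η) * ((|η|^β : ℝ) : ℂ)
              * picard α β F (j+1) t' η‖
            ≤ (A1*A2) * (hv c i (ξ-η) * (|η|^β * hv c j η)) := by
          intro η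
          rw [norm_mul, norm_mul, Complex.norm_real, Real.norm_eq_abs,
            abs_of_nonneg (Real.rpow_nonneg (abs_nonneg η) β)]
          have h1 := IH1 t' ht'0 (ξ-η)
          have h2 := IH2 t' ht'0 η
          rw [← hA1def] at h1
          rw [← hA2def] at h2
          have h1nn : (0:ℝ) ≤ A1 * hv c i (ξ-η) := le_trans (norm_nonneg _) h1
          have h2nn : (0:ℝ) ≤ A2 * hv c j η := le_trans (norm_nonneg _) h2
          calc ‖picard α β F (i+1) t' (ξ - η)‖ * |η|^β
                * ‖picard α β F (j+1) t' η‖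
              ≤ (A1 * hv c i (ξ-η)) * |η|^β * (A2 * hv c j η) := by
                refine mul_le_mul (mul_le_mul h1 le_rfl (Real.rpow_nonneg (abs_nonneg η) β) h1nn)
                  h2 (norm_nonneg _) ?_
                exact mul_nonneg h1nn (Real.rpow_nonneg (abs_nonneg η) β)
            _ = (A1*A2) * (hv c i (ξ-η) * (|η|^β * hv c j η)) := by ring
        have hcore_meas : Measurable (fun η : ℝ => hv c i (ξ-η) * (|η|^β * hv c j η)) := by
          refine (((hv_meas i).comp (measurable_const.sub measurable_id)).mul ?_)
          exact ((continuous_abs.rpow_const (fun x => Or.inr hβ.le)).measurable).mul (hv_meas j)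
        have hcore_int : Integrable (fun η : ℝ => hv c i (ξ-η) * (|η|^β * hv c j η)) := by
          refine Integrable.mono' (((hv_integrable hc j).const_mul
            (c^i * (2*((j:ℝ)+1)*c)^β))) hcore_meas.aestronglyMeasurable
            (Filter.Eventually.of_forall fun η => ?_)
          rw [Real.norm_eq_abs, abs_of_nonneg (mul_nonneg (hv_nonneg _ _)
            (mul_nonneg (Real.rpow_nonneg (abs_nonneg η) β) (hv_nonneg _ _)))]
          calc hv c i (ξ-η) * (|η|^β * hv c j η)
              ≤ c^i * ((2*((j:ℝ)+1)*c)^β * hv c j η) :=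
                mul_le_mul (hv_le hc i _) (hsupp2 η)
                  (mul_nonneg (Real.rpow_nonneg (abs_nonneg η) β) (hv_nonneg _ _))
                  (by positivity)
            _ = c^i * (2*((j:ℝ)+1)*c)^β * hv c j η := by ring
        have hconv_int : Integrable (fun η : ℝ => hv c i (ξ-η) * hv c j η) := by
          refine Integrable.mono' ((hv_integrable hc j).const_mul (c^i))
            (((hv_meas i).comp (measurable_const.sub measurable_id)).mul
              (hv_meas j)).aestronglyMeasurable
            (Filter.Eventually.of_forall fun η => ?_)
          rw [Real.norm_eq_abs, abs_of_nonneg (mul_nonneg (hv_nonneg _ _) (hv_nonneg _ _))]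
          exact mul_le_mul_of_nonneg_right (hv_le hc i _) (hv_nonneg _ _)
        have hcore_le : ∫ η : ℝ, hv c i (ξ-η) * (|η|^β * hv c j η)
            ≤ (2*((j:ℝ)+1)*c)^β * hv c n ξ := by
          have hptc : ∀ η : ℝ, hv c i (ξ-η) * (|η|^β * hv c j η)
              ≤ (2*((j:ℝ)+1)*c)^β * (hv c i (ξ-η) * hv c j η) := by
            intro η
            calc hv c i (ξ-η) * (|η|^β * hv c j η)
                ≤ hv c i (ξ-η) * ((2*((j:ℝ)+1)*c)^β * hv c j η) :=
                  mul_le_mul_of_nonneg_left (hsupp2 η) (hv_nonneg _ _)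
              _ = (2*((j:ℝ)+1)*c)^β * (hv c i (ξ-η) * hv c j η) := by ring
          calc ∫ η : ℝ, hv c i (ξ-η) * (|η|^β * hv c j η)
              ≤ ∫ η : ℝ, (2*((j:ℝ)+1)*c)^β * (hv c i (ξ-η) * hv c j η) := by
                refine integral_mono_of_nonneg (Filter.Eventually.of_forall fun η =>
                  mul_nonneg (hv_nonneg _ _) (mul_nonneg
                    (Real.rpow_nonneg (abs_nonneg η) β) (hv_nonneg _ _)))
                  (hconv_int.const_mul _) (Filter.Eventually.of_forall hptc)
            _ = (2*((j:ℝ)+1)*c)^β * ∫ η : ℝ, hv c i (ξ-η) * hv c j η :=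
                MeasureTheory.integral_const_mul _ _
            _ = (2*((j:ℝ)+1)*c)^β * hv c n ξ := by
                rw [hv_conv hc i j ξ, show i + j + 1 = n by omega]
        have hMt : (A1*A2) * ((2*((j:ℝ)+1)*c)^β * hv c n ξ) = Mterm * t'^k' := by
          rw [hA1def, hA2def, hMdef, hj]
          ring
        calc ‖∫ η : ℝ, picard α β F (i + 1) t' (ξ - η) * ((|η| ^ β : ℝ) : ℂ) *
              picard α β F (j + 1) t' η‖
            ≤ ∫ η : ℝ, ‖picard α β F (i + 1) t' (ξ - η) * ((|η| ^ β : ℝ) : ℂ) *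
              picard α β F (j + 1) t' η‖ := by
              simpa using MeasureTheory.norm_integral_le_integral_norm
                (fun η : ℝ => picard α β F (i + 1) t' (ξ - η) * ((|η| ^ β : ℝ) : ℂ) *
                  picard α β F (j + 1) t' η) (μ := volume)
          _ ≤ Mterm * t'^k' := by
              by_cases hint : Integrable (fun η : ℝ => ‖picard α β F (i + 1) t' (ξ - η) * ((|η| ^ β : ℝ) : ℂ) *
                  picard α β F (j + 1) t' η‖)
              · calc ∫ η : ℝ, ‖picard α β F (i + 1) t' (ξ - η) *
                    ((|η| ^ β : ℝ) : ℂ) * picard α β F (j + 1) t' η‖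
                    ≤ ∫ η : ℝ, (A1*A2) * (hv c i (ξ-η) * (|η|^β * hv c j η)) :=
                      integral_mono hint (hcore_int.const_mul _) habsG
                  _ = (A1*A2) * ∫ η : ℝ, hv c i (ξ-η) * (|η|^β * hv c j η) :=
                      MeasureTheory.integral_const_mul _ _
                  _ ≤ (A1*A2) * ((2*((j:ℝ)+1)*c)^β * hv c n ξ) :=
                      mul_le_mul_of_nonneg_left hcore_le (mul_nonneg hA1nn hA2nn)
                  _ = Mterm * t'^k' := hMt
              · rw [MeasureTheory.integral_undef hint]
                exact mul_nonneg hMnn (pow_nonneg ht'0 _)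
      -- now the time integral
      have hφint : IntervalIntegrable (fun t' : ℝ => Mterm * t'^k') volume 0 t :=
        (continuous_const.mul (continuous_pow k')).intervalIntegrable 0 t
      have htime : ‖∫ t' in (0:ℝ)..t,
            Complex.exp (-Complex.I * ((t - t' : ℝ) : ℂ) * ((|ξ| ^ α : ℝ) : ℂ)) *
              ∫ η : ℝ, picard α β F (i + 1) t' (ξ - η) * ((|η| ^ β : ℝ) : ℂ) *
                picard α β F (j + 1) t' η‖
          ≤ Mterm * (t^(k'+1)/((k':ℝ)+1)) := by
        have habs1 : ‖∫ t' in (0:ℝ)..t,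
              Complex.exp (-Complex.I * ((t - t' : ℝ) : ℂ) * ((|ξ| ^ α : ℝ) : ℂ)) *
                ∫ η : ℝ, picard α β F (i + 1) t' (ξ - η) * ((|η| ^ β : ℝ) : ℂ) *
                  picard α β F (j + 1) t' η‖
            ≤ ∫ t' in (0:ℝ)..t, ‖
              Complex.exp (-Complex.I * ((t - t' : ℝ) : ℂ) * ((|ξ| ^ α : ℝ) : ℂ)) *
                ∫ η : ℝ, picard α β F (i + 1) t' (ξ - η) * ((|η| ^ β : ℝ) : ℂ) *
                  picard α β F (j + 1) t' η‖ := by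
          simpa using intervalIntegral.norm_integral_le_integral_norm
            (μ := volume) (f := fun t' : ℝ =>
              Complex.exp (-Complex.I * ((t - t' : ℝ) : ℂ) * ((|ξ| ^ α : ℝ) : ℂ)) *
                ∫ η : ℝ, picard α β F (i + 1) t' (ξ - η) * ((|η| ^ β : ℝ) : ℂ) *
                  picard α β F (j + 1) t' η) ht
        have hend : (∫ t' in (0:ℝ)..t, Mterm * t'^k') = Mterm * (t^(k'+1)/((k':ℝ)+1)) := by
          rw [intervalIntegral.integral_const_mul, integral_pow]
          norm_num
        by_cases hII : IntervalIntegrable (fun t' : ℝ => ‖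
            Complex.exp (-Complex.I * ((t - t' : ℝ) : ℂ) * ((|ξ| ^ α : ℝ) : ℂ)) *
              ∫ η : ℝ, picard α β F (i + 1) t' (ξ - η) * ((|η| ^ β : ℝ) : ℂ) *
                picard α β F (j + 1) t' η‖) volume 0 t
        · refine le_trans habs1 ?_
          rw [← hend]
          exact intervalIntegral.integral_mono_on ht hII hφint hpt
        · refine le_trans habs1 ?_
          rw [intervalIntegral.integral_undef hII]
          rw [← hend]
          refine intervalIntegral.integral_nonneg ht fun u hu =>
            mul_nonneg hMnn (pow_nonneg hu.1 _)
      refine le_trans htime (le_of_eq ?_)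
      -- final per-term algebra
      rw [hMdef, hC0def]
      have e2b : (2*((j:ℝ)+1)*c)^β = 2^β * ((j:ℝ)+1)^β * c^β := by
        rw [show (2*((j:ℝ)+1)*c)^β = (2*((j:ℝ)+1))^β * c^β from
          Real.mul_rpow (by positivity) hc.le]
        rw [Real.mul_rpow (by norm_num) (by positivity)]
      have eNN : (N:ℝ)^(θ*β+θ*(-β+1/2)*((i:ℝ)+1)) * (N:ℝ)^(θ*β+θ*(-β+1/2)*((j:ℝ)+1))
          = (N:ℝ)^(θ*β + E) := by
        rw [← Real.rpow_add hN0, hEdef]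
        congr 1
        have : ((k'+2:ℕ):ℝ) = (i:ℝ) + (j:ℝ) + 2 := by
          push_cast [hj]
          ring
        rw [this]
        ring
      have efac : ((Nat.factorial i : ℝ) * (Nat.factorial j : ℝ))^m
          = ((Nat.factorial i : ℝ))^m * ((Nat.factorial j : ℝ))^m :=
        Real.mul_rpow (by positivity) (by positivity)
      have ejc : ((j+1:ℕ):ℝ) = (j:ℝ)+1 := by push_cast; ring
      have enc : ((n:ℕ):ℝ) = (k':ℝ)+1 := by rw [hndef]; push_cast; ring
      rw [efac, ejc, enc, e2b, ← eNN, hndef]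
      have h1 : ((i:ℝ)+1) ≠ 0 := by positivity
      have h2 : ((j:ℝ)+1) ≠ 0 := by positivity
      have h3 : ((k':ℝ)+1) ≠ 0 := by positivity
      field_simp

    refine le_trans (Finset.sum_le_sum key) ?_
    rw [← Finset.mul_sum]
    refine le_trans (mul_le_mul_of_nonneg_left (comb_key β hβ n hn1) hC0nn) (le_of_eq ?_)
    have hcβ : c^β = (N:ℝ)^((-θ)*β) := by
      rw [hcdef, ← Real.rpow_mul hN0.le]
    have hNE : (N:ℝ)^(θ*β + E) * c^β = (N:ℝ)^E := by
      rw [hcβ, ← Real.rpow_add hN0]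
      congr 1
      ring
    have hcast : ((k'+2:ℕ):ℝ) = ((n:ℕ):ℝ)+1 := by
      rw [hndef]
      push_cast
      ring
    rw [hC0def, hNE, hcast, hndef, hEdef]
    push_cast
    rw [hDdef]
    ring

/-- Pointwise bound for the low-frequency Picard iterates
`g_k`, with datum `ε N^{θ/2} 1_{[N^{−θ}, 2N^{−θ}]}`:
`|g_k(t,ξ)| ≤ ε (π² 2^β ε t)^{k−1} ((k−1)!)^{max(0,β−1)} N^{θβ+θ(−β+1/2)k} 1^{*(k)}(ξ)`. -/
theorem lowfreq_iterate_bound (α β θ ε : ℝ) (hα : 0 < α) (hβ : 0 < β) (hθ : 0 < θ)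
    (hε : 0 < ε) (N : ℕ) (hN : 1 ≤ N) (t : ℝ) (ht : 0 < t) (ξ : ℝ) (k : ℕ) (hk : 1 ≤ k) :
    ‖picard α β
        (fun x => ((ε * (N : ℝ) ^ (θ / 2) *
          Set.indicator (Set.Icc ((N : ℝ) ^ (-θ)) (2 * (N : ℝ) ^ (-θ)))
            (fun _ => (1 : ℝ)) x : ℝ) : ℂ)) k t ξ‖
      ≤ ε * (Real.pi ^ 2 * 2 ^ β * ε * t) ^ (k - 1) *
          ((Nat.factorial (k - 1) : ℝ)) ^ (max 0 (β - 1)) *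
          (N : ℝ) ^ (θ * β + θ * (-β + 1 / 2) * (k : ℝ)) *
          convPow (Set.indicator (Set.Icc ((N : ℝ) ^ (-θ)) (2 * (N : ℝ) ^ (-θ)))
              (fun _ => (1 : ℝ))) (k - 1)
            (Set.indicator (Set.Icc ((N : ℝ) ^ (-θ)) (2 * (N : ℝ) ^ (-θ)))
              (fun _ => (1 : ℝ))) ξ := by
  have h := main_bound α β θ ε hβ hθ hε N hN k hk t ht.le ξ
  have hk1 : (1:ℝ) ≤ (k:ℝ) := by exact_mod_cast hk
  have h1 : (0:ℝ) ≤ Real.pi ^ 2 * 2 ^ β * ε * t :=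
    mul_nonneg (mul_nonneg (by positivity) hε.le) ht.le
  have hXnn : 0 ≤ ε * (Real.pi ^ 2 * 2 ^ β * ε * t) ^ (k - 1) *
      ((Nat.factorial (k - 1) : ℝ)) ^ (max 0 (β - 1)) *
      (N : ℝ) ^ (θ * β + θ * (-β + 1 / 2) * (k : ℝ)) := by
    refine mul_nonneg (mul_nonneg (mul_nonneg hε.le (pow_nonneg h1 _))
      (Real.rpow_nonneg (Nat.cast_nonneg _) _)) (Real.rpow_nonneg (Nat.cast_nonneg _) _)
  have hYnn : (0:ℝ) ≤ convPow (Set.indicator (Set.Icc ((N : ℝ) ^ (-θ)) (2 * (N : ℝ) ^ (-θ)))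
              (fun _ => (1 : ℝ))) (k - 1)
            (Set.indicator (Set.Icc ((N : ℝ) ^ (-θ)) (2 * (N : ℝ) ^ (-θ)))
              (fun _ => (1 : ℝ))) ξ := hv_nonneg (c := (N:ℝ)^(-θ)) (k-1) ξ
  have hfrac : 1/(k:ℝ)^2 ≤ 1 := by
    rw [div_le_one (by positivity)]
    nlinarith
  refine le_trans h ?_
  exact mul_le_mul_of_nonneg_right (mul_le_of_le_one_left hXnn hfrac) hYnn
end

section
/- Let (a_k)_{k∈ℕ} be a sequence of positive real numbers and let C₀ > 0. Assume that a_k ≤ C₀ Σ_{k₁,k₂ ∈ ℕ, k₁+k₂=k} a_{k₁} a_{k₂} holds for every integer k ≥ 2. Then for every k ∈ ℕ one has a_k ≤ ((2/3) π² C₀)^{k−1} a₁^{k}. -/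
/-!
Strengthen the claim to `a k ≤ B ^ (k - 1) * a 1 ^ k / k ^ 2` with `B = (2/3) π² C₀` and prove it by
strong induction. The factor `1 / k²` is what makes the induction close: since
`k² / (k₁² k₂²) = (1/k₁ + 1/k₂)² ≤ 2 (1/k₁² + 1/k₂²)`, summing over `k₁ + k₂ = k` and using
`∑ 1/n² = π²/6` twice gives `∑_{k₁+k₂=k} 1/(k₁² k₂²) ≤ (2/3) π² / k²`.
-/

open Finset Real

def posAntidiagonal (k : ℕ) : Finset (ℕ × ℕ) :=
  (antidiagonal k).filter (fun p => 1 ≤ p.1 ∧ 1 ≤ p.2)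

theorem mem_posAntidiagonal {k : ℕ} {p : ℕ × ℕ} :
    p ∈ posAntidiagonal k ↔ p.1 + p.2 = k ∧ 1 ≤ p.1 ∧ 1 ≤ p.2 := by
  simp [posAntidiagonal]

theorem sum_inv_sq_le_of_injOn {ι : Type*} (s : Finset ι) {g : ι → ℕ} (hg : Set.InjOn g s) :
    ∑ i ∈ s, 1 / (g i : ℝ) ^ 2 ≤ π ^ 2 / 6 := by
  classical
  rw [← sum_image (f := fun n : ℕ => 1 / (n : ℝ) ^ 2) hg]
  exact sum_le_hasSum _ (fun n _ => by positivity) hasSum_zeta_two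

theorem add_sq_div_sq_mul_sq_le {x y : ℝ} (hx : x ≠ 0) (hy : y ≠ 0) :
    (x + y) ^ 2 / (x ^ 2 * y ^ 2) ≤ 2 * (1 / x ^ 2 + 1 / y ^ 2) :=
  calc (x + y) ^ 2 / (x ^ 2 * y ^ 2) = (x⁻¹ + y⁻¹) ^ 2 := by field_simp; ring
    _ ≤ 2 * ((x⁻¹) ^ 2 + (y⁻¹) ^ 2) := add_sq_le
    _ = 2 * (1 / x ^ 2 + 1 / y ^ 2) := by simp only [inv_pow, one_div]

theorem sum_posAntidiagonal_inv_sq_mul_sq_le (k : ℕ) :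
    ∑ p ∈ posAntidiagonal k, 1 / ((p.1 : ℝ) ^ 2 * (p.2 : ℝ) ^ 2) ≤ 2 / 3 * π ^ 2 / k ^ 2 := by
  have hfst : Set.InjOn Prod.fst (posAntidiagonal k : Set (ℕ × ℕ)) := fun p hp q hq =>
    (HasAntidiagonal.antidiagonal_congr (mem_filter.1 hp).1 (mem_filter.1 hq).1).2
  have hsnd : Set.InjOn Prod.snd (posAntidiagonal k : Set (ℕ × ℕ)) := fun p hp q hq =>
    (HasAntidiagonal.antidiagonal_congr' (mem_filter.1 hp).1 (mem_filter.1 hq).1).2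
  calc ∑ p ∈ posAntidiagonal k, 1 / ((p.1 : ℝ) ^ 2 * (p.2 : ℝ) ^ 2)
      ≤ ∑ p ∈ posAntidiagonal k, 2 * (1 / (p.1 : ℝ) ^ 2 + 1 / (p.2 : ℝ) ^ 2) / (k : ℝ) ^ 2 := by
        refine sum_le_sum fun p hp => ?_
        obtain ⟨rfl, h1, h2⟩ := mem_posAntidiagonal.1 hp
        have hx : (p.1 : ℝ) ≠ 0 := by positivity
        have hy : (p.2 : ℝ) ≠ 0 := by positivity
        calc 1 / ((p.1 : ℝ) ^ 2 * (p.2 : ℝ) ^ 2)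
            = ((p.1 + p.2 : ℝ) ^ 2 / ((p.1 : ℝ) ^ 2 * (p.2 : ℝ) ^ 2)) / (p.1 + p.2 : ℝ) ^ 2 := by
              field_simp
          _ ≤ _ := by push_cast; gcongr; exact add_sq_div_sq_mul_sq_le hx hy
    _ = 2 * (∑ p ∈ posAntidiagonal k, 1 / (p.1 : ℝ) ^ 2
          + ∑ p ∈ posAntidiagonal k, 1 / (p.2 : ℝ) ^ 2) / (k : ℝ) ^ 2 := by
        rw [← sum_div, ← mul_sum, sum_add_distrib]
    _ ≤ 2 * (π ^ 2 / 6 + π ^ 2 / 6) / (k : ℝ) ^ 2 := by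
        gcongr
        exacts [sum_inv_sq_le_of_injOn _ hfst, sum_inv_sq_le_of_injOn _ hsnd]
    _ = 2 / 3 * π ^ 2 / k ^ 2 := by ring

theorem le_pow_mul_pow_div_sq_of_le_sum_posAntidiagonal {a : ℕ → ℝ} {C : ℝ} (hC : 0 ≤ C)
    (hpos : ∀ k, 1 ≤ k → 0 < a k)
    (hrec : ∀ k, 2 ≤ k → a k ≤ C * ∑ p ∈ posAntidiagonal k, a p.1 * a p.2) (k : ℕ) (hk : 1 ≤ k) :
    a k ≤ (2 / 3 * π ^ 2 * C) ^ (k - 1) * a 1 ^ k / k ^ 2 := by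
  set B := 2 / 3 * π ^ 2 * C
  have ha1 := (hpos 1 le_rfl).le
  induction k using Nat.strong_induction_on with
  | _ k ih =>
  rcases hk.eq_or_lt with rfl | hk2
  · simp
  have hprod : ∀ p ∈ posAntidiagonal k,
      a p.1 * a p.2 ≤ B ^ (k - 2) * a 1 ^ k * (1 / ((p.1 : ℝ) ^ 2 * (p.2 : ℝ) ^ 2)) := by
    intro p hp
    obtain ⟨hsum, h1, h2⟩ := mem_posAntidiagonal.1 hp
    calc a p.1 * a p.2
        ≤ (B ^ (p.1 - 1) * a 1 ^ p.1 / p.1 ^ 2) * (B ^ (p.2 - 1) * a 1 ^ p.2 / p.2 ^ 2) :=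
          mul_le_mul (ih _ (by omega) h1) (ih _ (by omega) h2) (hpos _ h2).le (by positivity)
      _ = B ^ (p.1 - 1 + (p.2 - 1)) * a 1 ^ (p.1 + p.2) * (1 / ((p.1 : ℝ) ^ 2 * (p.2 : ℝ) ^ 2)) := by
          ring
      _ = B ^ (k - 2) * a 1 ^ k * (1 / ((p.1 : ℝ) ^ 2 * (p.2 : ℝ) ^ 2)) := by
          rw [show p.1 - 1 + (p.2 - 1) = k - 2 by omega, hsum]
  calc a k ≤ C * ∑ p ∈ posAntidiagonal k, a p.1 * a p.2 := hrec k hk2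
    _ ≤ C * (B ^ (k - 2) * a 1 ^ k *
          ∑ p ∈ posAntidiagonal k, 1 / ((p.1 : ℝ) ^ 2 * (p.2 : ℝ) ^ 2)) := by
        gcongr C * ?_
        rw [mul_sum]
        exact sum_le_sum hprod
    _ ≤ C * (B ^ (k - 2) * a 1 ^ k * (2 / 3 * π ^ 2 / k ^ 2)) := by
        gcongr
        exact sum_posAntidiagonal_inv_sq_mul_sq_le k
    _ = B ^ (k - 2 + 1) * a 1 ^ k / k ^ 2 := by ring
    _ = B ^ (k - 1) * a 1 ^ k / k ^ 2 := by rw [show k - 2 + 1 = k - 1 by omega]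

/-- If a sequence of positive reals satisfies `a_k ≤ C₀ ∑_{k₁+k₂=k, k₁,k₂≥1} a_{k₁} a_{k₂}`
for all `k ≥ 2`, then `a_k ≤ ((2/3)π²C₀)^{k−1} a₁^k` for all `k ≥ 1`. -/
theorem iterate_sequence_bound (a : ℕ → ℝ) (C₀ : ℝ) (hC₀ : 0 < C₀)
    (hpos : ∀ k : ℕ, 1 ≤ k → 0 < a k)
    (hrec : ∀ k : ℕ, 2 ≤ k →
      a k ≤ C₀ * ∑ p ∈ (Finset.HasAntidiagonal.antidiagonal k).filter (fun p => 1 ≤ p.1 ∧ 1 ≤ p.2),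
        a p.1 * a p.2) :
    ∀ k : ℕ, 1 ≤ k → a k ≤ (2 / 3 * Real.pi ^ 2 * C₀) ^ (k - 1) * (a 1) ^ k := by
  intro k hk
  have hk2 : (1 : ℝ) ≤ (k : ℝ) ^ 2 := one_le_pow₀ (by exact_mod_cast hk)
  have ha1 := (hpos 1 le_rfl).le
  exact (le_pow_mul_pow_div_sq_of_le_sum_posAntidiagonal hC₀.le hpos hrec k hk).trans
    (div_le_self (by positivity) hk2)
end

section
/- Let α > 0, let θ > max(α − 1, 0), and let k ∈ ℕ. Then there exist a constant C > 0 and an integer N₀ ∈ ℕ (depending on α, θ, k) such that для every N ≥ N₀, every η ∈ [N + (k−1)N^{−θ}, N + 2(k−1)N^{−θ}], and every ζ ∈ [N^{−θ}, 2N^{−θ}], the resonance function satisfies | (ζ + η)^α − ζ^α − η^α | ≤ C. -/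
/-!
For `α ≤ 1` the map `t ↦ t ^ α` is subadditive, so the resonance `(ζ + η) ^ α - ζ ^ α - η ^ α`
lies in `[-ζ ^ α, 0]` and is bounded because `ζ ≤ 2`. For `α ≥ 1` it is superadditive, so the
resonance lies in `[0, (ζ + η) ^ α - η ^ α]`, and the mean value theorem bounds this by
`α (ζ + η) ^ (α - 1) ζ ≲ N ^ (α - 1) N ^ (-θ)`, which is at most a constant since `θ ≥ α - 1`.
-/

namespace Real

lemma abs_rpow_add_sub_rpow_sub_rpow_le_of_le_one {α a b : ℝ} (hα₀ : 0 ≤ α) (hα₁ : α ≤ 1)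
    (ha : 0 ≤ a) (hb : 0 ≤ b) : |(a + b) ^ α - a ^ α - b ^ α| ≤ a ^ α := by
  have hsub := rpow_add_le_add_rpow ha hb hα₀ hα₁
  have hmono : b ^ α ≤ (a + b) ^ α := rpow_le_rpow hb (by linarith) hα₀
  rw [abs_le]
  constructor <;> linarith

lemma rpow_add_sub_rpow_le_mul {α a b : ℝ} (hα : 1 ≤ α) (ha : 0 ≤ a) (hb : 0 ≤ b) :
    (a + b) ^ α - b ^ α ≤ α * (a + b) ^ (α - 1) * a := by
  rcases ha.eq_or_lt with rfl | ha
  · simp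
  obtain ⟨c, hc, hslope⟩ := exists_hasDerivAt_eq_slope (fun t : ℝ => t ^ α)
    (fun t => α * t ^ (α - 1)) (by linarith : b < a + b)
    (continuous_rpow_const (by linarith)).continuousOn
    (fun t _ => hasDerivAt_rpow_const (Or.inr hα))
  have hc_le : c ^ (α - 1) ≤ (a + b) ^ (α - 1) :=
    rpow_le_rpow (by linarith [hc.1]) hc.2.le (by linarith)
  calc (a + b) ^ α - b ^ α = α * c ^ (α - 1) * a := by
        rw [hslope, add_sub_cancel_right, div_mul_cancel₀ _ ha.ne']
    _ ≤ α * (a + b) ^ (α - 1) * a := by gcongr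

lemma abs_rpow_add_sub_rpow_sub_rpow_le_of_one_le {α a b : ℝ} (hα : 1 ≤ α) (ha : 0 ≤ a)
    (hb : 0 ≤ b) : |(a + b) ^ α - a ^ α - b ^ α| ≤ α * (a + b) ^ (α - 1) * a := by
  have hsuper := add_rpow_le_rpow_add ha hb hα
  have hmvt := rpow_add_sub_rpow_le_mul hα ha hb
  have ha_pow : 0 ≤ a ^ α := rpow_nonneg ha α
  rw [abs_of_nonneg (by linarith)]
  linarith

lemma two_mul_rpow_mul_two_mul_rpow_neg_le {x α θ : ℝ} (hx : 1 ≤ x) (hαθ : α - 1 ≤ θ) :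
    (2 * x) ^ (α - 1) * (2 * x ^ (-θ)) ≤ 2 ^ α := by
  have hx₀ : 0 ≤ x := by linarith
  have hpow : x ^ (α - 1) * x ^ (-θ) ≤ 1 := by
    rw [← rpow_add (by linarith)]
    exact rpow_le_one_of_one_le_of_nonpos hx (by linarith)
  have htwo : (2 : ℝ) ^ (α - 1) * 2 = 2 ^ α := by
    rw [← rpow_add_one two_ne_zero, sub_add_cancel]
  calc (2 * x) ^ (α - 1) * (2 * x ^ (-θ))
        = 2 ^ α * (x ^ (α - 1) * x ^ (-θ)) := by
          rw [mul_rpow zero_le_two hx₀, ← htwo]; ring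
    _ ≤ 2 ^ α := mul_le_of_le_one_right (by positivity) hpow

end Real

open Real

lemma resonance_window_bounds {θ : ℝ} (hθ : 0 ≤ θ) {k N : ℕ} (hk : 1 ≤ k) (hN : 2 * k ≤ N)
    {η ζ : ℝ}
    (hη : η ∈ Set.Icc ((N : ℝ) + ((k : ℝ) - 1) * (N : ℝ) ^ (-θ))
      ((N : ℝ) + 2 * ((k : ℝ) - 1) * (N : ℝ) ^ (-θ)))
    (hζ : ζ ∈ Set.Icc ((N : ℝ) ^ (-θ)) (2 * (N : ℝ) ^ (-θ))) :
    1 ≤ (N : ℝ) ∧ 0 ≤ ζ ∧ ζ ≤ 2 ∧ 0 ≤ η ∧ ζ + η ≤ 2 * N := by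
  have hk' : (1 : ℝ) ≤ k := by exact_mod_cast hk
  have hN' : 2 * (k : ℝ) ≤ N := by exact_mod_cast hN
  have hN₁ : (1 : ℝ) ≤ N := by linarith
  have hp₀ : 0 ≤ (N : ℝ) ^ (-θ) := rpow_nonneg (by linarith) _
  have hp₁ : (N : ℝ) ^ (-θ) ≤ 1 := rpow_le_one_of_one_le_of_nonpos hN₁ (by linarith)
  obtain ⟨hη₁, hη₂⟩ := hη
  obtain ⟨hζ₁, hζ₂⟩ := hζ
  refine ⟨hN₁, by linarith, by linarith, by nlinarith, ?_⟩
  nlinarith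

/-- Boundedness of the resonance function: for `θ > max(α−1, 0)` there are `C > 0` and `N₀`
such that for all `N ≥ N₀`, `η ∈ [N+(k−1)N^{−θ}, N+2(k−1)N^{−θ}]` and `ζ ∈ [N^{−θ}, 2N^{−θ}]`,
`|(ζ+η)^α − ζ^α − η^α| ≤ C`. -/
theorem resonance_bound (α θ : ℝ) (hα : 0 < α) (hθ : max (α - 1) 0 < θ) (k : ℕ) (hk : 1 ≤ k) :
    ∃ C : ℝ, 0 < C ∧ ∃ N₀ : ℕ,
      ∀ N : ℕ, N₀ ≤ N →
        ∀ η ∈ Set.Icc ((N : ℝ) + ((k : ℝ) - 1) * (N : ℝ) ^ (-θ))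
            ((N : ℝ) + 2 * ((k : ℝ) - 1) * (N : ℝ) ^ (-θ)),
          ∀ ζ ∈ Set.Icc ((N : ℝ) ^ (-θ)) (2 * (N : ℝ) ^ (-θ)),
            |(ζ + η) ^ α - ζ ^ α - η ^ α| ≤ C := by
  obtain ⟨hθα, hθ₀⟩ := max_lt_iff.mp hθ
  refine ⟨max 1 α * 2 ^ α, by positivity, 2 * k, fun N hN η hη ζ hζ => ?_⟩
  obtain ⟨hN₁, hζ₀, hζ₂, hη₀, hsum⟩ := resonance_window_bounds hθ₀.le hk hN hη hζ
  rcases le_total α 1 with hα₁ | hα₁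
  · calc |(ζ + η) ^ α - ζ ^ α - η ^ α| ≤ ζ ^ α :=
          abs_rpow_add_sub_rpow_sub_rpow_le_of_le_one hα.le hα₁ hζ₀ hη₀
      _ ≤ 2 ^ α := rpow_le_rpow hζ₀ hζ₂ hα.le
      _ ≤ max 1 α * 2 ^ α := le_mul_of_one_le_left (by positivity) (le_max_left _ _)
  · calc |(ζ + η) ^ α - ζ ^ α - η ^ α| ≤ α * (ζ + η) ^ (α - 1) * ζ :=
          abs_rpow_add_sub_rpow_sub_rpow_le_of_one_le hα₁ hζ₀ hη₀
      _ ≤ α * ((2 * N) ^ (α - 1) * (2 * (N : ℝ) ^ (-θ))) := by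
          rw [mul_assoc]
          gcongr
          exact hζ.2
      _ ≤ α * 2 ^ α := by gcongr; exact two_mul_rpow_mul_two_mul_rpow_neg_le hN₁ hθα.le
      _ ≤ max 1 α * 2 ^ α := by gcongr; exact le_max_right _ _
end

section
/- Let α, β > 0, T > 0, and let N ∈ ℕ with N ≥ 1. Let φ̂ : ℕ₀ → ℂ satisfy φ̂(n) = 0 for all n ∉ {0, N}. Suppose a : [0,T] × ℕ₀ → ℂ is such that for every n ∈ ℕ₀ the map t ↦ a(t,n) is differentiable on [0,T], a(0,n) = φ̂(n), and ∂_t a(t,n) + i n^α a(t,n) = Σ_{n₁,n₂ ∈ ℕ₀, n₁+n₂=n} a(t,n₁) n₂^β a(t,n₂) for all t ∈ [0,T]. Then: (i) a(t,0) = φ̂(0) for all t ∈ [0,T]; (ii) a(t,n) = 0 for all t ∈ [0,T] and all n with 0 < n < N; and (iii) |a(t,N)| = e^{t N^β Re φ̂(0)} |φ̂(N)| for all t ∈ [0,T]. -/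
/-!
The zero mode solves `a' = -i 0^α a + a 0^β a = 0`, so it is constant. For `n ≤ N`, once the
modes `0 < m < n` are known to vanish, the only surviving term of the convolution sum is
`a(t,0) n^β a(t,n) = φ̂(0) n^β a(t,n)`, so `a(·,n)` solves a scalar linear ODE and equals
`e^{(n^β φ̂(0) - i n^α) t} φ̂(n)`. Strong induction kills the modes `0 < n < N`, and taking the
modulus at `n = N` leaves `e^{t N^β Re φ̂(0)} |φ̂(N)|`.
-/

theorem Convex.eq_exp_mul_of_hasDerivWithinAt {s : Set ℝ} (hs : Convex ℝ s) {c : ℂ}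
    {f : ℝ → ℂ} (hf : ∀ t ∈ s, HasDerivWithinAt f (c * f t) s t) {t₀ t : ℝ}
    (ht₀ : t₀ ∈ s) (ht : t ∈ s) :
    f t = Complex.exp (c * (t - t₀)) * f t₀ := by
  have hg : ∀ x ∈ s,
      HasDerivWithinAt (fun τ : ℝ => Complex.exp (-c * τ) * f τ) 0 s x := by
    intro x hx
    have hexp : HasDerivAt (fun τ : ℝ => Complex.exp (-c * τ)) (Complex.exp (-c * x) * -c) x := by
      simpa using ((Complex.ofRealCLM.hasDerivAt (x := x)).const_mul (-c)).cexp
    exact (hexp.hasDerivWithinAt.mul (hf x hx)).congr_deriv (by ring)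
  have hconst : Complex.exp (-c * t) * f t = Complex.exp (-c * t₀) * f t₀ := by
    simpa [sub_eq_zero] using
      hs.norm_image_sub_le_of_norm_hasDerivWithin_le (C := 0) hg (fun _ _ => by simp) ht₀ ht
  calc f t = Complex.exp (c * t) * (Complex.exp (-c * t) * f t) := by
        rw [← mul_assoc, ← Complex.exp_add]; simp
    _ = Complex.exp (c * (t - t₀)) * f t₀ := by
        rw [hconst, ← mul_assoc, ← Complex.exp_add]; ring_nf

theorem Finset.sum_antidiagonal_mul_eq_of_eq_zero {R : Type*} [NonUnitalNonAssocSemiring R]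
    {b w : ℕ → R} {n : ℕ} (hw : w 0 = 0) (hb : ∀ m, 0 < m → m < n → b m = 0) :
    ∑ p ∈ antidiagonal n, b p.1 * w p.2 * b p.2 = b 0 * w n * b n := by
  refine sum_eq_single_of_mem (0, n) (by simp) fun ⟨i, j⟩ hij hne => ?_
  rw [HasAntidiagonal.mem_antidiagonal] at hij
  rcases Nat.eq_zero_or_pos j with rfl | hj
  · simp [hw]
  · have hjn : j < n := by
      by_contra! hnj
      exact hne (by ext <;> simp <;> omega)
    simp [hb j hj hjn]

def IsModeSolution (α β T : ℝ) (a : ℝ → ℕ → ℂ) : Prop :=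
  ∀ n : ℕ, ∀ t ∈ Set.Icc (0 : ℝ) T,
    HasDerivWithinAt (fun τ => a τ n)
      (-(Complex.I * (((n : ℝ) ^ α : ℝ) : ℂ) * a t n) +
        ∑ p ∈ Finset.HasAntidiagonal.antidiagonal n,
          a t p.1 * (((p.2 : ℝ) ^ β : ℝ) : ℂ) * a t p.2)
      (Set.Icc (0 : ℝ) T) t

namespace IsModeSolution

variable {α β T : ℝ} {a : ℝ → ℕ → ℂ}

theorem zero_mode_eq (hα : 0 < α) (hβ : 0 < β) (h : IsModeSolution α β T a) :
    ∀ t ∈ Set.Icc (0 : ℝ) T, a t 0 = a 0 0 := by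
  intro t ht
  have hder : ∀ s ∈ Set.Icc (0 : ℝ) T,
      HasDerivWithinAt (fun τ => a τ 0) (0 * a s 0) (Set.Icc (0 : ℝ) T) s := fun s hs => by
    simpa [Real.zero_rpow hα.ne', Real.zero_rpow hβ.ne'] using h 0 s hs
  simpa using (convex_Icc 0 T).eq_exp_mul_of_hasDerivWithinAt hder ⟨le_rfl, ht.1.trans ht.2⟩ ht

theorem mode_eq_exp (hα : 0 < α) (hβ : 0 < β) (h : IsModeSolution α β T a) {n : ℕ}
    (hlow : ∀ m, 0 < m → m < n → ∀ t ∈ Set.Icc (0 : ℝ) T, a t m = 0) :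
    ∀ t ∈ Set.Icc (0 : ℝ) T, a t n = Complex.exp
      (((((n : ℝ) ^ β : ℝ) : ℂ) * a 0 0 - Complex.I * (((n : ℝ) ^ α : ℝ) : ℂ)) * t) * a 0 n := by
  intro t ht
  have hder : ∀ s ∈ Set.Icc (0 : ℝ) T, HasDerivWithinAt (fun τ => a τ n)
      (((((n : ℝ) ^ β : ℝ) : ℂ) * a 0 0 - Complex.I * (((n : ℝ) ^ α : ℝ) : ℂ)) * a s n)
      (Set.Icc (0 : ℝ) T) s := by
    intro s hs
    have hsum := Finset.sum_antidiagonal_mul_eq_of_eq_zero (b := fun m => a s m)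
      (w := fun m => (((m : ℝ) ^ β : ℝ) : ℂ)) (n := n)
      (by simp [Real.zero_rpow hβ.ne']) (fun m hm hmn => hlow m hm hmn s hs)
    have hs' := h n s hs
    rw [hsum, h.zero_mode_eq hα hβ s hs] at hs'
    exact hs'.congr_deriv (by ring)
  simpa using (convex_Icc 0 T).eq_exp_mul_of_hasDerivWithinAt hder ⟨le_rfl, ht.1.trans ht.2⟩ ht

theorem mode_eq_zero_of_lt (hα : 0 < α) (hβ : 0 < β) (h : IsModeSolution α β T a) {N : ℕ}
    (h₀ : ∀ n, 0 < n → n < N → a 0 n = 0) :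
    ∀ n, 0 < n → n < N → ∀ t ∈ Set.Icc (0 : ℝ) T, a t n = 0 := by
  intro n
  induction n using Nat.strong_induction_on with
  | _ n ih =>
    intro hn hnN t ht
    rw [h.mode_eq_exp hα hβ (fun m hm hmn => ih m hmn hm (hmn.trans hnN)) t ht, h₀ n hn hnN,
      mul_zero]

end IsModeSolution

theorem torus_ode_solution_structure_general (α β T : ℝ) (hα : 0 < α) (hβ : 0 < β)
    (N : ℕ) (φh : ℕ → ℂ) (hφh : ∀ n : ℕ, n ≠ 0 → n ≠ N → φh n = 0)
    (a : ℝ → ℕ → ℂ)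
    (ha0 : ∀ n : ℕ, a 0 n = φh n)
    (hODE : ∀ n : ℕ, ∀ t ∈ Set.Icc (0 : ℝ) T,
      HasDerivWithinAt (fun τ => a τ n)
        (-(Complex.I * (((n : ℝ) ^ α : ℝ) : ℂ) * a t n) +
          ∑ p ∈ Finset.HasAntidiagonal.antidiagonal n,
            a t p.1 * (((p.2 : ℝ) ^ β : ℝ) : ℂ) * a t p.2)
        (Set.Icc (0 : ℝ) T) t) :
    (∀ t ∈ Set.Icc (0 : ℝ) T, a t 0 = φh 0) ∧
    (∀ t ∈ Set.Icc (0 : ℝ) T, ∀ n : ℕ, 0 < n → n < N → a t n = 0) ∧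
    (∀ t ∈ Set.Icc (0 : ℝ) T,
      ‖a t N‖ = Real.exp (t * (N : ℝ) ^ β * (φh 0).re) * ‖φh N‖) := by
  have h : IsModeSolution α β T a := hODE
  have hmid := h.mode_eq_zero_of_lt hα hβ (N := N) fun n hn hnN => by
    rw [ha0, hφh n hn.ne' hnN.ne]
  refine ⟨fun t ht => by rw [h.zero_mode_eq hα hβ t ht, ha0],
    fun t ht n hn hnN => hmid n hn hnN t ht, fun t ht => ?_⟩
  rw [h.mode_eq_exp hα hβ (fun m hm hmN => hmid m hm hmN) t ht, norm_mul, Complex.norm_exp,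
    ha0, ha0]
  congr 2
  simp [Complex.sub_re, Complex.mul_re]
  ring

/-- For the Fourier-coefficient ODE system of `∂ₜu + iD^α u = u D^β u` on the torus with
initial datum supported on `{0, N}`: the zero mode is constant, the modes `0 < n < N` vanish,
and `|a(t,N)| = e^{t N^β Re φ̂(0)} |φ̂(N)|`.
Note that Mathlib's real power satisfies `(0:ℝ)^γ = 0` for `γ ≠ 0`,
matching the convention `0^β := 0`. -/
theorem torus_ode_solution_structure (α β T : ℝ) (hα : 0 < α) (hβ : 0 < β) (hT : 0 < T)
    (N : ℕ) (hN : 1 ≤ N) (φh : ℕ → ℂ) (hφh : ∀ n : ℕ, n ≠ 0 → n ≠ N → φh n = 0)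
    (a : ℝ → ℕ → ℂ)
    (ha0 : ∀ n : ℕ, a 0 n = φh n)
    (hODE : ∀ n : ℕ, ∀ t ∈ Set.Icc (0 : ℝ) T,
      HasDerivWithinAt (fun τ => a τ n)
        (-(Complex.I * (((n : ℝ) ^ α : ℝ) : ℂ) * a t n) +
          ∑ p ∈ Finset.HasAntidiagonal.antidiagonal n,
            a t p.1 * (((p.2 : ℝ) ^ β : ℝ) : ℂ) * a t p.2)
        (Set.Icc (0 : ℝ) T) t) :
    (∀ t ∈ Set.Icc (0 : ℝ) T, a t 0 = φh 0) ∧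
    (∀ t ∈ Set.Icc (0 : ℝ) T, ∀ n : ℕ, 0 < n → n < N → a t n = 0) ∧
    (∀ t ∈ Set.Icc (0 : ℝ) T,
      ‖a t N‖ = Real.exp (t * (N : ℝ) ^ β * (φh 0).re) * ‖φh N‖) :=
  torus_ode_solution_structure_general α β T hα hβ N φh hφh a ha0 hODE
end
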